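/- arXiv:1908.02169 — 7 statements merged into one kernel-verified Lean document; each statement's English description precedes it below -/
import Mathlib

section
/- Let U be an m-dimensional F_q-subspace of F_{q^n} and let ℓ be an integer. Every F_q-bilinear form B: U × F_{q^n} → F_q can be written as B(x,y) = Tr_{q^n/q}(Σ_{j=0}^{m-1} a_j y x^{q^{j-ℓ}}) for uniquely determined a_0, ..., a_{m-1} ∈ F_{q^n}. -/
/-!
Write `σ` for the `q`-Frobenius of `F/K`, so that `x ^ q ^ (((j : ℤ) - ℓ) % n).toNat = σ ^ (j - ℓ) x`.
Since the trace form is nondegenerate, bilinear forms `B : U × F → K` correspond to `K`-linear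
maps `g : U → F` via `B x y = Tr (g x * y)`. The maps `x ↦ σ ^ (j - ℓ) x = (σ ^ (-ℓ) x) ^ q ^ j`,
`j < m`, are `F`-linearly independent in `U →ₗ[K] F`: a vanishing combination gives a polynomial
`∑ cⱼ X ^ q ^ j` of degree `< q ^ m` with the `q ^ m` roots `σ ^ (-ℓ) U`. As
`U →ₗ[K] F` has `F`-dimension `m`, they form a basis, and the `aⱼ` are the coordinates of `g`.
-/

open Polynomial

theorem Polynomial.eq_zero_of_forall_sum_mul_pow_pow_eq_zero {R ι : Type*} [CommRing R]
    [IsDomain R] [Fintype ι] {q m : ℕ} (hq : 1 < q) {f : ι → R} (hf : Function.Injective f)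
    (hcard : q ^ m ≤ Fintype.card ι) {c : Fin m → R}
    (h : ∀ i, ∑ j, c j * f i ^ q ^ (j : ℕ) = 0) : c = 0 := by
  set P : R[X] := ∑ j : Fin m, monomial (q ^ (j : ℕ)) (c j)
  have hdeg : P.natDegree < q ^ m := by
    have hterm (j : Fin m) : q ^ (j : ℕ) < q ^ m := Nat.pow_lt_pow_right hq j.isLt
    have : P.natDegree ≤ q ^ m - 1 := natDegree_sum_le_of_forall_le _ _ fun j _ =>
      (natDegree_monomial_le _).trans (Nat.le_sub_one_of_lt (hterm j))
    have : 0 < q ^ m := pow_pos (by omega) m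
    omega
  have hP : P = 0 := eq_zero_of_natDegree_lt_card_of_eval_eq_zero P hf
    (fun i => by simpa [P, eval_finsetSum] using h i) (hdeg.trans_le hcard)
  funext j
  simpa [P, finsetSum_coeff, coeff_monomial, Nat.pow_right_inj hq, Fin.val_inj] using
    congrArg (coeff · (q ^ (j : ℕ))) hP

namespace FiniteField

variable {K F : Type*} [Field K] [Fintype K] [Field F] [Algebra K F]

theorem frobeniusAlgEquivOfAlgebraic_pow_apply [Algebra.IsAlgebraic K F] (t : ℕ) (x : F) :
    (frobeniusAlgEquivOfAlgebraic K F ^ t) x = x ^ Fintype.card K ^ t := by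
  rw [AlgEquiv.coe_pow, coe_frobeniusAlgEquivOfAlgebraic_iterate]

variable [Finite F]

theorem frobeniusAlgEquivOfAlgebraic_zpow_apply (z : ℤ) (x : F) :
    (frobeniusAlgEquivOfAlgebraic K F ^ z) x =
      x ^ Fintype.card K ^ (z % (Module.finrank K F : ℤ)).toNat := by
  have hn : (0 : ℤ) < Module.finrank K F := by exact_mod_cast Module.finrank_pos
  rw [← zpow_mod_orderOf, orderOf_frobeniusAlgEquivOfAlgebraic]
  lift z % (Module.finrank K F : ℤ) to ℕ using Int.emod_nonneg z hn.ne' with k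
  rw [zpow_natCast, Int.toNat_natCast, frobeniusAlgEquivOfAlgebraic_pow_apply]

theorem linearIndependent_frobeniusAlgEquivOfAlgebraic_pow_comp {V : Type*} [AddCommGroup V]
    [Module K V] {m : ℕ} (ι : V →ₗ[K] F) (hι : Function.Injective ι)
    (hm : m ≤ Module.finrank K V) :
    LinearIndependent F fun j : Fin m =>
      (frobeniusAlgEquivOfAlgebraic K F ^ (j : ℕ)).toLinearMap ∘ₗ ι := by
  have : Finite V := Finite.of_injective ι hι
  have : Fintype V := Fintype.ofFinite V
  rw [Fintype.linearIndependent_iff]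
  intro c hc
  refine congrFun (Polynomial.eq_zero_of_forall_sum_mul_pow_pow_eq_zero
    (Fintype.one_lt_card (α := K)) hι ?_ fun x => ?_)
  · rw [Module.card_eq_pow_finrank (K := K) (V := V)]
    exact Nat.pow_le_pow_right Fintype.card_pos hm
  · simpa [coe_frobeniusAlgEquivOfAlgebraic_iterate] using LinearMap.congr_fun hc x

end FiniteField

theorem Algebra.existsUnique_forall_apply_eq_trace_mul {K F V : Type*} [Field K] [Field F]
    [Algebra K F] [FiniteDimensional K F] [Algebra.IsSeparable K F] [AddCommGroup V] [Module K V]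
    (B : V →ₗ[K] F →ₗ[K] K) :
    ∃! g : V →ₗ[K] F, ∀ x y, B x y = Algebra.trace K F (g x * y) := by
  set e := (Algebra.traceForm K F).toDual (traceForm_nondegenerate K F)
  refine ⟨e.symm.toLinearMap ∘ₗ B, fun x y => ?_, fun g hg => ?_⟩
  · simp [e, ← Algebra.traceForm_apply]
  · ext x
    apply e.injective
    ext y
    simp [e, LinearMap.BilinForm.toDual_def, hg]

theorem stmt_8_general (q n m : ℕ) (ℓ : ℤ)
    (K F : Type) [Field K] [Fintype K] [Field F] [Fintype F] [Algebra K F]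
    (hK : Fintype.card K = q) (hF : Fintype.card F = q ^ n)
    (U : Submodule K F) (hU : Module.finrank K U = m)
    (B : U →ₗ[K] F →ₗ[K] K) :
    ∃! a : Fin m → F, ∀ (x : U) (y : F),
      B x y = Algebra.trace K F
        (∑ j : Fin m, a j * y * (x : F) ^ q ^ (((j : ℤ) - ℓ) % (n : ℤ)).toNat) := by
  subst hK
  have hn : Module.finrank K F = n := Nat.pow_right_injective (Fintype.one_lt_card (α := K))
    (Module.card_eq_pow_finrank.symm.trans hF)
  set σ := FiniteField.frobeniusAlgEquivOfAlgebraic K F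
  have hli := FiniteField.linearIndependent_frobeniusAlgEquivOfAlgebraic_pow_comp
    ((σ ^ (-ℓ)).toLinearMap ∘ₗ U.subtype) ((σ ^ (-ℓ)).injective.comp U.injective_subtype) hU.ge
  let b := basisOfLinearIndependentOfCardEqFinrank' _ hli
    (by rw [Fintype.card_fin, Module.finrank_linearMap_self, hU])
  have hb (a : Fin m → F) (x : U) (y : F) : b.equivFun.symm a x * y =
      ∑ j : Fin m, a j * y * (x : F) ^ Fintype.card K ^ (((j : ℤ) - ℓ) % (n : ℤ)).toNat := by
    simp only [Module.Basis.equivFun_symm_apply, b, coe_basisOfLinearIndependentOfCardEqFinrank',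
      LinearMap.sum_apply, LinearMap.smul_apply, Finset.sum_mul]
    refine Finset.sum_congr rfl fun j _ => ?_
    have hσ : σ ^ (j : ℕ) * σ ^ (-ℓ) = σ ^ ((j : ℤ) - ℓ) := by
      rw [← zpow_natCast, ← zpow_add, sub_eq_add_neg]
    rw [smul_eq_mul, LinearMap.comp_apply, AlgEquiv.toLinearMap_apply, LinearMap.comp_apply,
      AlgEquiv.toLinearMap_apply, Submodule.subtype_apply, ← AlgEquiv.mul_apply, hσ,
      FiniteField.frobeniusAlgEquivOfAlgebraic_zpow_apply, hn, mul_right_comm]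
  simpa only [hb] using (b.equivFun.symm.bijective.existsUnique_iff).mp
    (Algebra.existsUnique_forall_apply_eq_trace_mul B)

/-- Every `F_q`-bilinear form `B : U × F_{qⁿ} → F_q` on an `m`-dimensional subspace `U`
can be written uniquely as `B(x,y) = Tr(∑ⱼ aⱼ y x^(q^(j-ℓ)))`, `q`-exponents mod `n`. -/
theorem stmt_8 (q n m : ℕ) (hq : IsPrimePow q) (hn : 0 < n) (hm : m ≤ n) (ℓ : ℤ)
    (K F : Type) [Field K] [Fintype K] [Field F] [Fintype F] [Algebra K F]
    (hK : Fintype.card K = q) (hF : Fintype.card F = q ^ n)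
    (U : Submodule K F) (hU : Module.finrank K U = m)
    (B : U →ₗ[K] F →ₗ[K] K) :
    ∃! a : Fin m → F, ∀ (x : U) (y : F),
      B x y = Algebra.trace K F
        (∑ j : Fin m, a j * y * (x : F) ^ q ^ (((j : ℤ) - ℓ) % (n : ℤ)).toNat) :=
  stmt_8_general q n m ℓ K F hK hF U hU B
end

section
/- A nonzero linearized polynomial f(x) = Σ_{i=0}^{k} c_i x^{q^{si}} over F_{q^n} with c_k ≠ 0 and k ≤ n-1, where gcd(s,n) = 1, has at most q^k roots in F_{q^n}; consequently, the F_q-linear map it induces on F_{q^n} has rank at least n - k. -/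
/-!
Write `σ` for `x ↦ x ^ q ^ s`, so that the polynomial is `f x = ∑ cᵢ σⁱ x`. As `gcd (s, n) = 1`,
an element fixed by `σ` is also fixed by `x ↦ x ^ q`, so `σ` has at most `q` fixed points.
Induct on `k`. If `x ≠ 0` is a root of `f`, then `f (x z) = ∑ dᵢ σⁱ z` with `∑ dᵢ = 0`, and Abel
summation rewrites this as `g (σ z - z)` for a σ-polynomial `g` of degree `k - 1`. Since
`z ↦ σ z - z` is additive with kernel the fixed points of `σ`, `f` has at most `q · q ^ (k - 1)`
roots. The rank bound is rank–nullity: the kernel is an `F_q`-space with at most `q ^ k` elements.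
-/

open Finset Function

theorem AddMonoidHom.card_ker_comp_le {G H M : Type*} [AddGroup G] [AddGroup H] [AddGroup M]
    [Finite G] [Finite H] (f : G →+ H) (g : H →+ M) :
    Nat.card (g.comp f).ker ≤ Nat.card f.ker * Nat.card g.ker := by
  let f' : (g.comp f).ker →+ g.ker :=
    (f.comp (g.comp f).ker.subtype).codRestrict g.ker fun x => x.2
  calc Nat.card (g.comp f).ker = Nat.card f'.ker * Nat.card f'.range := by
        rw [← AddSubgroup.index_ker, AddSubgroup.card_mul_index]
    _ ≤ Nat.card f.ker * Nat.card g.ker := by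
        gcongr
        · refine Nat.card_le_card_of_injective (fun x => ⟨x.1.1, congrArg Subtype.val x.2⟩) ?_
          intro x y h
          ext
          simpa using congrArg Subtype.val h
        · exact AddSubgroup.card_le_card_addGroup _

open Polynomial in
theorem card_fixedPoints_pow_le (F : Type*) [Field F] {q : ℕ} (hq : 1 < q) :
    Nat.card (fixedPoints (· ^ q : F → F)) ≤ q := by
  have hsub : fixedPoints (· ^ q : F → F) ⊆ (X ^ q - X : F[X]).rootSet F := fun x hx => by
    rw [mem_rootSet]
    refine ⟨FiniteField.X_pow_card_sub_X_ne_zero F hq, ?_⟩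
    have hx : x ^ q = x := hx
    simp [hx]
  calc Nat.card (fixedPoints (· ^ q : F → F)) ≤ ((X ^ q - X : F[X]).rootSet F).ncard := by
        rw [← Nat.card_coe_set_eq]
        exact Nat.card_mono (rootSet_finite _ _) hsub
    _ ≤ q := (ncard_rootSet_le _ _).trans (FiniteField.X_pow_card_sub_X_natDegree_eq F hq).le

theorem LinearMap.sub_le_finrank_range_of_card_ker_le {K V W : Type*} [Field K] [Finite K]
    [AddCommGroup V] [Module K V] [Module.Finite K V] [AddCommGroup W] [Module K W]
    (f : V →ₗ[K] W) {k : ℕ} (h : Nat.card (ker f) ≤ Nat.card K ^ k) :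
    Module.finrank K V - k ≤ Module.finrank K (range f) := by
  rw [Module.natCard_eq_pow_finrank (K := K)] at h
  have hker := (Nat.pow_le_pow_iff_right Finite.one_lt_card).mp h
  have := f.finrank_range_add_finrank_ker
  omega

theorem Function.fixedPoints_iterate_subset_of_coprime {α : Type*} {f : α → α} {s n : ℕ}
    (hn : ∀ x, IsPeriodicPt f n x) (hs : Nat.gcd s n = 1) : fixedPoints f^[s] ⊆ fixedPoints f :=
  fun x hx => by simpa [hs, IsPeriodicPt] using IsPeriodicPt.gcd hx (hn x)

section Linearized

variable {F : Type*} [Field F] (σ : F →+* F)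

def linearizedHom (k : ℕ) (c : ℕ → F) : F →+ F where
  toFun x := ∑ i ∈ range (k + 1), c i * (σ ^ i) x
  map_zero' := by simp
  map_add' x y := by simp only [map_add, mul_add, sum_add_distrib]

theorem linearizedHom_apply (k : ℕ) (c : ℕ → F) (x : F) :
    linearizedHom σ k c x = ∑ i ∈ range (k + 1), c i * (σ ^ i) x := rfl

theorem linearizedHom_mul (k : ℕ) (c : ℕ → F) (x z : F) :
    linearizedHom σ k c (x * z) = linearizedHom σ k (fun i => c i * (σ ^ i) x) z := by
  simp only [linearizedHom_apply, map_mul, mul_assoc]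

/-- Abel summation against the telescoping sums `∑_{j<i} σʲ(σz - z) = σⁱz - z`. -/
theorem linearizedHom_succ_eq_comp {k : ℕ} {d : ℕ → F} (hd : ∑ i ∈ range (k + 2), d i = 0) :
    linearizedHom σ (k + 1) d =
      (linearizedHom σ k fun j => ∑ i ∈ Ico (j + 1) (k + 2), d i).comp
        (σ.toAddMonoidHom - AddMonoidHom.id F) := by
  ext z
  have telescope (i : ℕ) : ∑ j ∈ range i, (σ ^ j) (σ z - z) = (σ ^ i) z - z := by
    have hsucc (j : ℕ) : (σ ^ j) (σ z) = (σ ^ (j + 1)) z := by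
      rw [pow_succ]; rfl
    simp only [map_sub, hsucc]
    simpa using sum_range_sub (fun j => (σ ^ j) z) i
  calc linearizedHom σ (k + 1) d z
      = ∑ i ∈ range (k + 2), d i * ((σ ^ i) z - z) := by
        simp only [linearizedHom_apply, mul_sub, sum_sub_distrib, ← sum_mul, hd, zero_mul,
          sub_zero]
    _ = ∑ i ∈ range (k + 2), ∑ j ∈ range i, d i * (σ ^ j) (σ z - z) := by
        simp only [← mul_sum, telescope]
    _ = ∑ j ∈ range (k + 1), ∑ i ∈ Ico (j + 1) (k + 2), d i * (σ ^ j) (σ z - z) := by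
        refine sum_comm' fun i j => ?_
        simp only [mem_range, mem_Ico]
        omega
    _ = _ := by simp only [linearizedHom_apply, AddMonoidHom.comp_apply, sum_mul]; rfl

theorem card_ker_linearizedHom_le [Finite F] {q : ℕ} (hσ : Nat.card (fixedPoints σ) ≤ q) :
    ∀ {k : ℕ} {c : ℕ → F}, c k ≠ 0 → Nat.card (linearizedHom σ k c).ker ≤ q ^ k
  | 0, c, hc => by
    rw [pow_zero, AddSubgroup.card_le_one_iff_eq_bot, AddSubgroup.eq_bot_iff_forall]
    intro x hx
    simpa [linearizedHom_apply, hc] using hx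
  | k + 1, c, hc => by
    obtain hbot | ⟨x, hx, hx0⟩ := (linearizedHom σ (k + 1) c).ker.bot_or_exists_ne_zero
    · have : Nonempty (fixedPoints σ) := ⟨⟨0, map_zero σ⟩⟩
      have hq : 0 < q := Nat.card_pos.trans_le hσ
      rw [hbot, AddSubgroup.card_bot]
      exact Nat.one_le_pow _ _ hq
    set d : ℕ → F := fun i => c i * (σ ^ i) x
    have hd : ∑ i ∈ range (k + 2), d i = 0 := hx
    have hdk : ∑ i ∈ Ico (k + 1) (k + 2), d i ≠ 0 := by
      rw [Nat.Ico_succ_singleton, sum_singleton]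
      exact mul_ne_zero hc ((map_ne_zero _).mpr hx0)
    calc Nat.card (linearizedHom σ (k + 1) c).ker
        = Nat.card (linearizedHom σ (k + 1) d).ker := by
          refine Nat.card_congr ((Equiv.mulLeft₀ x hx0).subtypeEquiv fun z => ?_).symm
          simp [d, linearizedHom_mul]
      _ ≤ Nat.card (fixedPoints σ) * q ^ k := by
          rw [linearizedHom_succ_eq_comp σ hd]
          refine (AddMonoidHom.card_ker_comp_le _ _).trans (Nat.mul_le_mul ?_ ?_)
          · refine (Nat.card_congr (Equiv.subtypeEquivRight fun x => ?_)).le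
            simp [sub_eq_zero, IsFixedPt]
          · exact card_ker_linearizedHom_le hσ hdk
      _ ≤ q ^ (k + 1) := by rw [pow_succ']; gcongr

end Linearized

theorem stmt_9_general (q n k s : ℕ) (hs : Nat.gcd s n = 1)
    (K F : Type) [Field K] [Fintype K] [Field F] [Fintype F] [Algebra K F]
    (hK : Fintype.card K = q) (hF : Fintype.card F = q ^ n)
    (c : ℕ → F) (hck : c k ≠ 0) :
    Nat.card {x : F | ∑ i ∈ Finset.range (k + 1), c i * x ^ q ^ (s * i) = 0} ≤ q ^ k ∧
    ∀ φ : F →ₗ[K] F,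
      (∀ x : F, φ x = ∑ i ∈ Finset.range (k + 1), c i * x ^ q ^ (s * i)) →
      n - k ≤ Module.finrank K (LinearMap.range φ) := by
  set ρ : F →+* F := (FiniteField.frobeniusAlgHom K F).toRingHom
  have hρ : ⇑ρ = (· ^ q) := hK ▸ FiniteField.coe_frobeniusAlgHom K F
  have hpow (i : ℕ) (x : F) : ((ρ ^ s) ^ i) x = x ^ q ^ (s * i) := by
    rw [← pow_mul, RingHom.coe_pow, hρ, pow_iterate]
  have hρn (x : F) : IsPeriodicPt ρ n x := by
    rw [IsPeriodicPt, IsFixedPt, hρ, pow_iterate, ← hF]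
    exact FiniteField.pow_card x
  have hfix : fixedPoints (ρ ^ s) ⊆ fixedPoints (· ^ q : F → F) :=
    hρ ▸ fixedPoints_iterate_subset_of_coprime hρn hs
  have hq : 1 < q := hK ▸ Fintype.one_lt_card
  have hroots : Nat.card (linearizedHom (ρ ^ s) k c).ker ≤ q ^ k :=
    card_ker_linearizedHom_le _
      ((Nat.card_mono (Set.toFinite _) hfix).trans (card_fixedPoints_pow_le F hq)) hck
  have hker (x : F) :
      x ∈ (linearizedHom (ρ ^ s) k c).ker ↔ ∑ i ∈ range (k + 1), c i * x ^ q ^ (s * i) = 0 := by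
    simp only [AddMonoidHom.mem_ker, linearizedHom_apply, hpow]
  refine ⟨(Nat.card_congr (Equiv.subtypeEquivRight fun x => (hker x).symm)).le.trans hroots,
    fun φ hφ => ?_⟩
  have hfinrank : Module.finrank K F = n := by
    have hcard := Module.card_eq_pow_finrank (K := K) (V := F)
    rw [hK, hF] at hcard
    exact Nat.pow_right_injective hq hcard.symm
  refine hfinrank ▸ φ.sub_le_finrank_range_of_card_ker_le ?_
  rw [Nat.card_eq_fintype_card (α := K), hK]
  refine le_trans (Nat.card_congr (Equiv.subtypeEquivRight fun x => ?_)).le hroots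
  rw [LinearMap.mem_ker, hφ, hker]

/-- A nonzero linearized polynomial `∑_{i≤k} cᵢ x^(q^(si))` with `c_k ≠ 0`, `k ≤ n-1`,
`gcd(s,n)=1`, has at most `q^k` roots in `F_{qⁿ}`; the induced `F_q`-linear map has
rank at least `n - k`. -/
theorem stmt_9 (q n k s : ℕ) (hq : IsPrimePow q) (hn : 0 < n)
    (hk : k ≤ n - 1) (hs : Nat.gcd s n = 1)
    (K F : Type) [Field K] [Fintype K] [Field F] [Fintype F] [Algebra K F]
    (hK : Fintype.card K = q) (hF : Fintype.card F = q ^ n)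
    (c : ℕ → F) (hck : c k ≠ 0) :
    Nat.card {x : F | ∑ i ∈ Finset.range (k + 1), c i * x ^ q ^ (s * i) = 0} ≤ q ^ k ∧
    ∀ φ : F →ₗ[K] F,
      (∀ x : F, φ x = ∑ i ∈ Finset.range (k + 1), c i * x ^ q ^ (s * i)) →
      n - k ≤ Module.finrank K (LinearMap.range φ) :=
  stmt_9_general q n k s hs K F hK hF c hck
end

section
/- The generalized Gabidulin code G_{n,k,s} = { Σ_{i=0}^{k-1} a_i x^{q^{si}} : a_i ∈ F_{q^n} }, with gcd(s,n) = 1 and 1 ≤ k ≤ n, is an F_q-subspace of End_{F_q}(F_{q^n}) of F_q-dimension kn in which every nonzero element has rank at least n - k + 1; i.e., it is an MRD code with minimum distance d = n - k + 1 attaining the Singleton-like bound q^{n(n-d+1)}. -/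
/-!
Put `σ = Frob^s`. As `gcd(s, n) = 1`, some power of `σ` is the Frobenius, which generates
`Gal(F/K)`, so the fixed field of `σ` is `K`. The code is the image of
`b ↦ ∑_{i<k} b_i σ^i`, and everything rests on one fact: a nonzero `σ`-linearized polynomial
`φ = ∑_{i<k} a_i σ^i` has a kernel of `K`-dimension `< k`.

This goes by induction on `k`. Pick `u ≠ 0` in `ker φ`; then `ψ = φ ∘ (u * ·)` has a kernel of the
same dimension and coefficients `b_i = a_i σ^i(u)` with `∑ b_i = ψ 1 = φ u = 0`, so summation by
parts factors `ψ = η ∘ (σ - 1)`, where `η` is a nonzero linearized polynomial with `k - 1` terms.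
Since `ker (σ - 1) = K` is a line, `dim ker ψ ≤ dim ker η + 1 < k`. Hence the encoding is
injective, which gives the dimension `kn`, and rank–nullity gives rank `≥ n - k + 1`.
-/

open Finset LinearMap Module

section Kernel

variable {K V W U : Type*} [Field K] [AddCommGroup V] [Module K V] [AddCommGroup W] [Module K W]
  [AddCommGroup U] [Module K U]

theorem LinearMap.finrank_ker_comp_le [FiniteDimensional K V] [FiniteDimensional K W]
    (g : W →ₗ[K] U) (f : V →ₗ[K] W) :
    finrank K (ker (g ∘ₗ f)) ≤ finrank K (ker g) + finrank K (ker f) := by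
  set f' : ker (g ∘ₗ f) →ₗ[K] ker g := f.restrict fun _ hx ↦ by rwa [ker_comp] at hx with hf'
  have hrange : finrank K (range f') ≤ finrank K (ker g) := Submodule.finrank_le _
  have hker : finrank K (ker f') ≤ finrank K (ker f) := by
    rw [hf', ker_restrict, ← Submodule.finrank_map_subtype_eq]
    exact Submodule.finrank_mono (Submodule.map_comap_le _ _)
  have := f'.finrank_range_add_finrank_ker
  omega

theorem LinearMap.finrank_ker_comp_linearEquiv (g : W →ₗ[K] U) (e : V ≃ₗ[K] W) :
    finrank K (ker (g ∘ₗ e.toLinearMap)) = finrank K (ker g) := by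
  rw [ker_comp, Submodule.comap_equiv_eq_map_symm, LinearEquiv.finrank_map_eq]

end Kernel

theorem eq_zero_of_forall_sum_range_succ_eq_zero {M : Type*} [AddCommMonoid M] {b : ℕ → M}
    {k : ℕ} (h : ∀ j ≤ k, ∑ i ∈ range (j + 1), b i = 0) {i : ℕ} (hi : i ≤ k) : b i = 0 := by
  cases i with
  | zero => simpa using h 0 hi
  | succ j =>
    have hsucc := h (j + 1) hi
    rwa [sum_range_succ, h j (by omega), zero_add] at hsucc

section Linearized

variable {K F : Type*} [Field K] [Field F] [Algebra K F]

def linearizedMap (σ : F →ₐ[K] F) (a : ℕ → F) (k : ℕ) : F →ₗ[K] F :=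
  ∑ i ∈ range k, a i • (σ ^ i).toLinearMap

@[simp]
theorem linearizedMap_apply (σ : F →ₐ[K] F) (a : ℕ → F) (k : ℕ) (x : F) :
    linearizedMap σ a k x = ∑ i ∈ range k, a i * (σ ^ i) x := by
  simp [linearizedMap]

theorem linearizedMap_comp_mulLeft (σ : F →ₐ[K] F) (a : ℕ → F) (k : ℕ) (u : F) :
    linearizedMap σ a k ∘ₗ mulLeft K u = linearizedMap σ (fun i ↦ a i * (σ ^ i) u) k := by
  ext x
  simp only [comp_apply, mulLeft_apply, linearizedMap_apply, map_mul, mul_assoc]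

theorem linearizedMap_eq_comp_sub_one (σ : F →ₐ[K] F) (b : ℕ → F) (k : ℕ)
    (hb : ∑ i ∈ range (k + 1), b i = 0) :
    linearizedMap σ b (k + 1) =
      linearizedMap σ (fun j ↦ -∑ i ∈ range (j + 1), b i) k ∘ₗ (σ.toLinearMap - 1) := by
  ext x
  have := sum_range_by_parts (fun i ↦ (σ ^ i) x) b (k + 1)
  simp only [add_tsub_cancel_right, smul_eq_mul, hb, mul_zero, zero_sub] at this
  simp only [linearizedMap_apply, comp_apply, LinearMap.sub_apply, AlgHom.toLinearMap_apply,
    Module.End.one_apply, map_sub, neg_mul, sum_neg_distrib, mul_comm (b _), this]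
  simp only [pow_succ, AlgHom.mul_apply, sub_mul, sum_sub_distrib, mul_comm (∑ i ∈ range _, b i)]
  ring

theorem finrank_ker_algHom_sub_one_le [FiniteDimensional K F] {σ : F →ₐ[K] F}
    (hσ : ∀ x, σ x = x → x ∈ Set.range (algebraMap K F)) :
    finrank K (ker (σ.toLinearMap - 1)) ≤ 1 := by
  have hle : ker (σ.toLinearMap - 1) ≤ range (Algebra.linearMap K F) := fun x hx ↦
    hσ x (sub_eq_zero.mp hx)
  calc finrank K (ker (σ.toLinearMap - 1))
      ≤ finrank K (range (Algebra.linearMap K F)) := Submodule.finrank_mono hle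
    _ ≤ finrank K K := finrank_range_le _
    _ = 1 := finrank_self K

theorem finrank_ker_linearizedMap_lt [FiniteDimensional K F] {σ : F →ₐ[K] F}
    (hσ : ∀ x, σ x = x → x ∈ Set.range (algebraMap K F)) {k : ℕ} {a : ℕ → F}
    (ha : ∃ i < k, a i ≠ 0) :
    finrank K (ker (linearizedMap σ a k)) < k := by
  induction k generalizing a with
  | zero => obtain ⟨i, hi, -⟩ := ha; omega
  | succ k ih =>
    by_contra! hle
    obtain ⟨u, hu, hu0⟩ : ∃ u ∈ ker (linearizedMap σ a (k + 1)), u ≠ 0 :=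
      Submodule.exists_mem_ne_zero_of_ne_bot fun h ↦ by rw [h, finrank_bot] at hle; omega
    set b : ℕ → F := fun i ↦ a i * (σ ^ i) u
    have hb : ∑ i ∈ range (k + 1), b i = 0 :=
      calc ∑ i ∈ range (k + 1), b i = linearizedMap σ b (k + 1) 1 := by simp
        _ = linearizedMap σ a (k + 1) u := by simp [b]
        _ = 0 := hu
    set c : ℕ → F := fun j ↦ -∑ i ∈ range (j + 1), b i
    have hc : ∃ j < k, c j ≠ 0 := by
      by_contra! hc
      obtain ⟨i, hi, hai⟩ := ha
      have hbi : b i = 0 := eq_zero_of_forall_sum_range_succ_eq_zero (fun j hj ↦ by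
        rcases hj.lt_or_eq with hj | rfl
        · exact neg_eq_zero.mp (hc j hj)
        · exact hb) (Nat.le_of_lt_succ hi)
      exact hai ((mul_eq_zero.mp hbi).resolve_right ((map_ne_zero _).mpr hu0))
    have hker : finrank K (ker (linearizedMap σ b (k + 1))) =
        finrank K (ker (linearizedMap σ a (k + 1))) := by
      rw [← linearizedMap_comp_mulLeft]
      exact finrank_ker_comp_linearEquiv _
        (LinearEquiv.ofBijective (mulLeft K u) (mulLeft_bijective₀ u hu0))
    rw [show linearizedMap σ b (k + 1) = linearizedMap σ c k ∘ₗ (σ.toLinearMap - 1) from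
      linearizedMap_eq_comp_sub_one σ b k hb] at hker
    have := finrank_ker_comp_le (linearizedMap σ c k) (σ.toLinearMap - 1)
    have := finrank_ker_algHom_sub_one_le hσ
    have := ih hc
    omega

noncomputable def linearizedEncoding (σ : F →ₐ[K] F) (k : ℕ) : (Fin k → F) →ₗ[K] F →ₗ[K] F :=
  (Fintype.linearCombination F fun i : Fin k ↦ (σ ^ (i : ℕ)).toLinearMap).restrictScalars K

theorem linearizedEncoding_apply (σ : F →ₐ[K] F) {k : ℕ} (b : Fin k → F) :
    linearizedEncoding σ k b = linearizedMap σ (fun i ↦ if h : i < k then b ⟨i, h⟩ else 0) k := by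
  rw [linearizedEncoding, restrictScalars_apply, Fintype.linearCombination_apply, linearizedMap,
    ← Fin.sum_univ_eq_sum_range]
  simp

theorem mem_range_linearizedEncoding_iff (σ : F →ₐ[K] F) (k : ℕ) (φ : F →ₗ[K] F) :
    φ ∈ range (linearizedEncoding σ k) ↔ ∃ a : ℕ → F, linearizedMap σ a k = φ := by
  constructor
  · rintro ⟨b, rfl⟩
    exact ⟨_, (linearizedEncoding_apply σ b).symm⟩
  · rintro ⟨a, rfl⟩
    refine ⟨fun i ↦ a i, ?_⟩
    rw [linearizedEncoding_apply, linearizedMap, linearizedMap]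
    refine sum_congr rfl fun i hi ↦ ?_
    rw [dif_pos (mem_range.mp hi)]

variable [FiniteDimensional K F] {σ : F →ₐ[K] F}

theorem finrank_ker_linearizedEncoding_lt
    (hσ : ∀ x, σ x = x → x ∈ Set.range (algebraMap K F)) {k : ℕ} {b : Fin k → F} (hb : b ≠ 0) :
    finrank K (ker (linearizedEncoding σ k b)) < k := by
  obtain ⟨i, hi⟩ := Function.ne_iff.mp hb
  rw [linearizedEncoding_apply]
  exact finrank_ker_linearizedMap_lt hσ ⟨i, i.2, by simpa using hi⟩

theorem injective_linearizedEncoding (hσ : ∀ x, σ x = x → x ∈ Set.range (algebraMap K F))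
    {k : ℕ} (hk : k ≤ finrank K F) : Function.Injective (linearizedEncoding σ k) := by
  refine (injective_iff_map_eq_zero _).mpr fun b hb ↦ ?_
  by_contra hb0
  have := finrank_ker_linearizedEncoding_lt hσ hb0
  rw [hb, ker_zero, finrank_top] at this
  omega

end Linearized

namespace FiniteField

variable {K F : Type*} [Field K] [Fintype K] [Field F] [Algebra K F]

theorem frobeniusAlgHom_pow_apply (m : ℕ) (x : F) :
    (frobeniusAlgHom K F ^ m) x = x ^ Fintype.card K ^ m := by
  rw [AlgHom.coe_pow, coe_frobeniusAlgHom, pow_iterate]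

theorem mem_range_algebraMap_of_frobeniusAlgHom_pow_apply_eq [Finite F] {s : ℕ}
    (hs : s.Coprime (finrank K F)) {x : F} (hx : (frobeniusAlgHom K F ^ s) x = x) :
    x ∈ Set.range (algebraMap K F) := by
  obtain ⟨m, hm⟩ := exists_pow_eq_self_of_coprime (x := frobeniusAlgHom K F)
    (by rwa [orderOf_frobeniusAlgHom])
  have hfrob : frobeniusAlgHom K F x = x := by
    rw [← hm, AlgHom.coe_pow, Function.iterate_fixed hx]
  rw [IsGalois.mem_range_algebraMap_iff_fixed]
  intro f
  obtain ⟨i, rfl⟩ := (bijective_frobeniusAlgEquivOfAlgebraic_pow K F).2 f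
  rw [AlgEquiv.coe_pow]
  exact Function.iterate_fixed hfrob _

end FiniteField

theorem stmt_10_general (q n k s : ℕ)
    (hk1 : 1 ≤ k) (hkn : k ≤ n) (hs : Nat.gcd s n = 1)
    (K F : Type) [Field K] [Fintype K] [Field F] [Fintype F] [Algebra K F]
    (hK : Fintype.card K = q) (hF : Fintype.card F = q ^ n) :
    ∃ G : Submodule K (F →ₗ[K] F),
      (∀ φ : F →ₗ[K] F, φ ∈ G ↔
        ∃ a : ℕ → F, ∀ x : F, φ x = ∑ i ∈ Finset.range k, a i * x ^ q ^ (s * i)) ∧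
      Module.finrank K G = k * n ∧
      (∀ φ ∈ G, φ ≠ 0 → n - k + 1 ≤ Module.finrank K (LinearMap.range φ)) ∧
      Nat.card G = q ^ (n * (n - (n - k + 1) + 1)) := by
  subst hK
  have hn : finrank K F = n :=
    Nat.pow_right_injective Fintype.one_lt_card (card_eq_pow_finrank.symm.trans hF)
  set σ := FiniteField.frobeniusAlgHom K F ^ s
  have hσ (x : F) : σ x = x → x ∈ Set.range (algebraMap K F) :=
    FiniteField.mem_range_algebraMap_of_frobeniusAlgHom_pow_apply_eq (hn ▸ hs)
  have hσ_pow (i : ℕ) (x : F) : (σ ^ i) x = x ^ Fintype.card K ^ (s * i) := by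
    rw [← pow_mul, FiniteField.frobeniusAlgHom_pow_apply]
  have hdim : finrank K (range (linearizedEncoding σ k)) = k * n := by
    rw [finrank_range_of_inj (injective_linearizedEncoding hσ (hn ▸ hkn)), finrank_pi_fintype, hn,
      sum_const, card_univ, Fintype.card_fin, smul_eq_mul]
  refine ⟨range (linearizedEncoding σ k), fun φ ↦ ?_, hdim, ?_, ?_⟩
  · simp only [mem_range_linearizedEncoding_iff, LinearMap.ext_iff, linearizedMap_apply, hσ_pow,
      eq_comm]
  · rintro _ ⟨b, rfl⟩ hφ
    have hker := finrank_ker_linearizedEncoding_lt hσ (b := b)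
      (by rintro rfl; exact hφ (map_zero _))
    have := finrank_range_add_finrank_ker (linearizedEncoding σ k b)
    omega
  · rw [natCard_eq_pow_finrank (K := K), hdim, Nat.card_eq_fintype_card, mul_comm,
      show n - (n - k + 1) + 1 = k by omega]

/-- The generalized Gabidulin code `G_{n,k,s}` is an `F_q`-subspace of
`End_{F_q}(F_{qⁿ})` of dimension `kn`, every nonzero element of which has rank at
least `n - k + 1`; it attains the Singleton-like bound `q^(n(n-d+1))` with
`d = n - k + 1`, i.e. it is an MRD code. -/
theorem stmt_10 (q n k s : ℕ) (hq : IsPrimePow q) (hn : 0 < n)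
    (hk1 : 1 ≤ k) (hkn : k ≤ n) (hs : Nat.gcd s n = 1)
    (K F : Type) [Field K] [Fintype K] [Field F] [Fintype F] [Algebra K F]
    (hK : Fintype.card K = q) (hF : Fintype.card F = q ^ n) :
    ∃ G : Submodule K (F →ₗ[K] F),
      (∀ φ : F →ₗ[K] F, φ ∈ G ↔
        ∃ a : ℕ → F, ∀ x : F, φ x = ∑ i ∈ Finset.range k, a i * x ^ q ^ (s * i)) ∧
      Module.finrank K G = k * n ∧
      (∀ φ ∈ G, φ ≠ 0 → n - k + 1 ≤ Module.finrank K (LinearMap.range φ)) ∧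
      Nat.card G = q ^ (n * (n - (n - k + 1) + 1)) :=
  stmt_10_general q n k s hk1 hkn hs K F hK hF
end

section
/- Let C ⊆ End_{F_q}(F_{q^n}) be an additive subgroup such that every nonzero element of C has rank at least d. Then |C| ≤ q^{n(n-d+1)} (the Singleton-like bound for rank metric codes). -/
/-!
Restricting to a subspace `U` of dimension `dim V - d + 1` is injective on a code of minimum rank
`d`: the difference of two codewords agreeing on `U` has a kernel of dimension `> dim V - d`, hence
rank `< d`, so it vanishes. The code therefore embeds into `Hom(U, W)`, which has
`q ^ (dim W * (dim V - d + 1))` elements.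
-/

open Module

variable {K V W : Type*} [Field K] [AddCommGroup V] [Module K V] [AddCommGroup W] [Module K W]

theorem exists_submodule_finrank_eq {m : ℕ} (hm : m ≤ finrank K V) :
    ∃ U : Submodule K V, finrank K U = m := by
  obtain ⟨v, hv⟩ := exists_linearIndependent_of_le_finrank hm
  exact ⟨Submodule.span K (Set.range v), by rw [finrank_span_eq_card hv, Fintype.card_fin]⟩

theorem LinearMap.finrank_add_finrank_range_le_of_le_ker [FiniteDimensional K V]
    {f : V →ₗ[K] W} {U : Submodule K V} (hU : U ≤ LinearMap.ker f) :
    finrank K U + finrank K (LinearMap.range f) ≤ finrank K V := by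
  have := Submodule.finrank_mono hU
  have := f.finrank_range_add_finrank_ker
  omega

theorem injective_domRestrict_of_minRank [FiniteDimensional K V] {d : ℕ}
    {C : AddSubgroup (V →ₗ[K] W)}
    (hC : ∀ f ∈ C, f ≠ 0 → d ≤ finrank K (LinearMap.range f))
    {U : Submodule K V} (hU : finrank K V < finrank K U + d) :
    Function.Injective ((LinearMap.domRestrict' U).toAddMonoidHom.comp C.subtype) := by
  refine (injective_iff_map_eq_zero _).2 fun ⟨f, hf⟩ hfU => ?_
  have hker : U ≤ LinearMap.ker f := fun x hx => LinearMap.congr_fun hfU ⟨x, hx⟩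
  by_contra hne
  have hrank := hC f hf fun h => hne (Subtype.ext h)
  have hdim := LinearMap.finrank_add_finrank_range_le_of_le_ker hker
  omega

theorem natCard_le_of_minRank [Finite K] [FiniteDimensional K V] [FiniteDimensional K W]
    {d : ℕ} (hd : 1 ≤ d) (hdV : d ≤ finrank K V) (C : AddSubgroup (V →ₗ[K] W))
    (hC : ∀ f ∈ C, f ≠ 0 → d ≤ finrank K (LinearMap.range f)) :
    Nat.card C ≤ Nat.card K ^ (finrank K W * (finrank K V - d + 1)) := by
  obtain ⟨U, hU⟩ :=
    exists_submodule_finrank_eq (show finrank K V - d + 1 ≤ finrank K V by omega)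
  have : Finite (U →ₗ[K] W) := Module.finite_of_finite K
  calc Nat.card C ≤ Nat.card (U →ₗ[K] W) :=
        Nat.card_le_card_of_injective _ (injective_domRestrict_of_minRank hC (by omega))
    _ = Nat.card K ^ (finrank K W * (finrank K V - d + 1)) := by
        rw [Module.natCard_eq_pow_finrank (K := K), Module.finrank_linearMap, hU, Nat.mul_comm]

theorem stmt_11_general (q n d : ℕ) (hd1 : 1 ≤ d) (hdn : d ≤ n)
    (K F : Type) [Field K] [Fintype K] [Field F] [Fintype F] [Algebra K F]
    (hK : Fintype.card K = q) (hF : Fintype.card F = q ^ n)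
    (C : AddSubgroup (F →ₗ[K] F))
    (hC : ∀ f ∈ C, f ≠ 0 → d ≤ Module.finrank K (LinearMap.range f)) :
    Nat.card C ≤ q ^ (n * (n - d + 1)) := by
  have hq : 2 ≤ q := hK ▸ Fintype.one_lt_card (α := K)
  have hdim : finrank K F = n := by
    refine Nat.pow_right_injective hq ?_
    dsimp only
    rw [← hF, Module.card_eq_pow_finrank (K := K), hK]
  have := natCard_le_of_minRank hd1 (hdim ▸ hdn) C hC
  rwa [hdim, Nat.card_eq_fintype_card (α := K), hK] at this

/-- Singleton-like bound: an additive `d`-code `C ⊆ End_{F_q}(F_{qⁿ})` satisfies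
`|C| ≤ q^(n(n-d+1))`. -/
theorem stmt_11 (q n d : ℕ) (hq : IsPrimePow q) (hd1 : 1 ≤ d) (hdn : d ≤ n)
    (K F : Type) [Field K] [Fintype K] [Field F] [Fintype F] [Algebra K F]
    (hK : Fintype.card K = q) (hF : Fintype.card F = q ^ n)
    (C : AddSubgroup (F →ₗ[K] F))
    (hC : ∀ f ∈ C, f ≠ 0 → d ≤ Module.finrank K (LinearMap.range f)) :
    Nat.card C ≤ q ^ (n * (n - d + 1)) :=
  stmt_11_general q n d hd1 hdn K F hK hF C hC
end

section
/- Suppose n - d is even, 1 ≤ d ≤ n, and gcd(s,n) = 1. The Schmidt code S_{n,d,s} = { b_0 x + Σ_{i=1}^{(n-d)/2} ( b_i x^{q^{si}} + (b_i x)^{q^{s(n-i)}} ) : b_0, ..., b_{(n-d)/2} ∈ F_{q^n} } equals the intersection of G' with S_n(q), where G' = G_{n,n-d+1,s} ∘ x^{q^{s(n+d)/2}} is the set of compositions f(x^{q^{s(n+d)/2}}) for f in the generalized Gabidulin code G_{n,n-d+1,s}, and S_n(q) is the space of self-adjoint linearized polynomials. -/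
section helpers
variable {F : Type} [Field F] [Fintype F] {q n : ℕ}

lemma pow_qn (hF : Fintype.card F = q ^ n) (x : F) : x ^ q ^ n = x := by
  rw [← hF]; exact FiniteField.pow_card x

lemma pow_qn_pow (hF : Fintype.card F = q ^ n) (x : F) (j : ℕ) : x ^ (q ^ n) ^ j = x := by
  induction j with
  | zero => simp
  | succ j ih => rw [pow_succ, pow_mul, ih, pow_qn hF]

lemma pow_q_mod (hF : Fintype.card F = q ^ n) (x : F) (k : ℕ) :
    x ^ q ^ k = x ^ q ^ (k % n) := by
  conv_lhs => rw [← Nat.div_add_mod k n]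
  rw [pow_add, pow_mul, ← pow_mul, mul_comm, pow_mul, pow_mul, pow_qn_pow hF]

lemma indep (hF : Fintype.card F = q ^ n) (hq : 2 ≤ q) (hn : 1 ≤ n) (c : ℕ → F)
    (h : ∀ x : F, ∑ j ∈ Finset.range n, c j * x ^ q ^ j = 0) : ∀ j < n, c j = 0 := by
  classical
  set P : Polynomial F := ∑ j ∈ Finset.range n, Polynomial.C (c j) * Polynomial.X ^ (q ^ j) with hP
  have heval : ∀ x : F, P.eval x = 0 := by
    intro x
    rw [hP, Polynomial.eval_finset_sum]
    simpa using h x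
  have hdeg : P.natDegree < Fintype.card F := by
    rw [hF]
    have : P.natDegree ≤ q ^ (n - 1) := by
      apply Polynomial.natDegree_sum_le_of_forall_le
      intro j hj
      refine le_trans (Polynomial.natDegree_C_mul_le _ _) ?_
      rw [Polynomial.natDegree_X_pow]
      exact Nat.pow_le_pow_right (by omega) (by simp at hj; omega)
    refine lt_of_le_of_lt this ?_
    exact Nat.pow_lt_pow_right hq (by omega)
  have hP0 : P = 0 :=
    Polynomial.eq_zero_of_natDegree_lt_card_of_eval_eq_zero P Function.injective_id
      (fun x => heval x) hdeg
  intro j hj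
  have := congrArg (fun p => Polynomial.coeff p (q ^ j)) hP0
  simp only [Polynomial.finset_sum_coeff, Polynomial.coeff_C_mul, Polynomial.coeff_X_pow,
    Polynomial.coeff_zero, hP] at this
  rw [Finset.sum_eq_single j] at this
  · simpa using this
  · intro k hk hkj
    have : q ^ j ≠ q ^ k := fun hh => hkj ((Nat.pow_right_injective hq hh).symm)
    simp [this, (by tauto : ¬ (q ^ j = q ^ k))]
  · intro hjj; exact absurd (Finset.mem_range.mpr hj) hjj

lemma indep2 (hF : Fintype.card F = q ^ n) (hq : 2 ≤ q) (hn : 1 ≤ n) (c c' : ℕ → F)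
    (h : ∀ x : F, ∑ j ∈ Finset.range n, c j * x ^ q ^ j
        = ∑ j ∈ Finset.range n, c' j * x ^ q ^ j) : ∀ j < n, c j = c' j := by
  intro j hj
  have := indep hF hq hn (fun j => c j - c' j) (fun x => by
    simp only [sub_mul, Finset.sum_sub_distrib, h x, sub_self]) j hj
  simpa [sub_eq_zero] using this

end helpers

lemma einv {s s' n : ℕ} (hs' : (s * s') % n = 1) :
    ∀ t < n, (s' * ((s * t) % n)) % n = t := by
  intro t ht
  have h1 : (s' * ((s * t) % n)) % n = ((s * s') * t) % n := by
    conv_lhs => rw [Nat.mul_mod, Nat.mod_mod_of_dvd _ (dvd_refl n)]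
    rw [← Nat.mul_mod]
    ring_nf
  rw [h1, Nat.mul_mod, hs', one_mul, Nat.mod_mod_of_dvd _ (dvd_refl n),
    Nat.mod_eq_of_lt ht]

lemma mod_zero_bound {n a : ℕ} (h : a % n = 0) (h1 : 0 < a) (h2 : a < n + n) : a = n := by
  rcases Nat.lt_or_ge a n with h4 | h4
  · rw [Nat.mod_eq_of_lt h4] at h; omega
  · rw [Nat.mod_eq_sub_mod h4, Nat.mod_eq_of_lt (by omega)] at h; omega

lemma scancel {s s' n : ℕ} (hs' : (s * s') % n = 1) (hn : 0 < n) :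
    ∀ a b : ℕ, (s * a) % n = (s * b) % n → a % n = b % n := by
  have key : ∀ a : ℕ, (s' * ((s * a) % n)) % n = a % n := by
    intro a
    have h1 : (s * (a % n)) % n = (s * a) % n := by
      conv_rhs => rw [Nat.mul_mod, ← Nat.mod_mod_of_dvd a (dvd_refl n), ← Nat.mul_mod]
    rw [← h1]
    exact einv hs' (a % n) (Nat.mod_lt _ hn)
  intro a b hab
  rw [← key a, ← key b, hab]

lemma sum_perm {F : Type} [AddCommMonoid F] {s s' n : ℕ} (hs' : (s * s') % n = 1)
    (hn : 0 < n) (g : ℕ → F) :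
    ∑ j ∈ Finset.range n, g j = ∑ t ∈ Finset.range n, g ((s * t) % n) := by
  have hs'' : (s' * s) % n = 1 := by rwa [mul_comm] at hs'
  refine Finset.sum_nbij' (fun u => (s' * u) % n) (fun t => (s * t) % n) ?_ ?_ ?_ ?_ ?_
  · intro a ha; exact Finset.mem_range.mpr (Nat.mod_lt _ hn)
  · intro a ha; exact Finset.mem_range.mpr (Nat.mod_lt _ hn)
  · intro a ha
    exact einv hs'' a (Finset.mem_range.mp ha)
  · intro a ha
    exact einv hs' a (Finset.mem_range.mp ha)
  · intro a ha
    congr 1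
    exact (einv hs'' a (Finset.mem_range.mp ha)).symm

lemma icc_reflect {F : Type} [AddCommMonoid F] (M : ℕ) (h : ℕ → F) :
    ∑ i ∈ Finset.Icc 1 M, h i = ∑ k ∈ Finset.range M, h (M - k) := by
  rw [← Finset.Ico_add_one_right_eq_Icc, Finset.sum_Ico_eq_sum_range,
    (by omega : M + 1 - 1 = M), ← Finset.sum_range_reflect]
  refine Finset.sum_congr rfl ?_
  intro k hk
  have : k < M := Finset.mem_range.mp hk
  congr 1
  omega

lemma sum_formula {F : Type} [Field F] [Fintype F] {q n s s' m : ℕ}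
    (hF : Fintype.card F = q ^ n) (hn : 2 ≤ n) (hs' : (s * s') % n = 1)
    (hm : m + m < n) (b c : ℕ → F)
    (h0 : c 0 = b 0)
    (h1 : ∀ t, 1 ≤ t → t ≤ m → c ((s * t) % n) = b t)
    (h2 : ∀ t, m < t → t < n - m → c ((s * t) % n) = 0)
    (h3 : ∀ t, n - m ≤ t → t < n → c ((s * t) % n) = b (n - t) ^ q ^ ((s * t) % n))
    (x : F) :
    ∑ j ∈ Finset.range n, c j * x ^ q ^ j
      = b 0 * x + ∑ i ∈ Finset.Icc 1 m,
          (b i * x ^ q ^ (s * i) + (b i * x) ^ q ^ (s * (n - i))) := by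
  rw [sum_perm hs' (by omega) (fun j => c j * x ^ q ^ j)]
  rw [Finset.range_eq_Ico,
    ← Finset.sum_Ico_consecutive _ (by omega : (0:ℕ) ≤ n - m) (by omega : n - m ≤ n),
    ← Finset.sum_Ico_consecutive _ (by omega : (0:ℕ) ≤ m + 1) (by omega : m + 1 ≤ n - m),
    ← Finset.sum_Ico_consecutive _ (by omega : (0:ℕ) ≤ 1) (by omega : 1 ≤ m + 1)]
  have e0 : ∑ t ∈ Finset.Ico 0 1, c ((s*t)%n) * x ^ q ^ ((s*t)%n) = b 0 * x := by
    rw [Finset.sum_Ico_eq_sum_range]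
    simp [h0]
  have e1 : ∑ t ∈ Finset.Ico 1 (m+1), c ((s*t)%n) * x ^ q ^ ((s*t)%n)
      = ∑ i ∈ Finset.Icc 1 m, b i * x ^ q ^ (s * i) := by
    rw [Finset.Ico_add_one_right_eq_Icc]
    refine Finset.sum_congr rfl ?_
    intro i hi
    rw [Finset.mem_Icc] at hi
    rw [h1 i hi.1 hi.2, ← pow_q_mod hF x (s*i)]
  have e2 : ∑ t ∈ Finset.Ico (m+1) (n-m), c ((s*t)%n) * x ^ q ^ ((s*t)%n) = 0 := by
    refine Finset.sum_eq_zero ?_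
    intro t ht
    rw [Finset.mem_Ico] at ht
    rw [h2 t (by omega) (by omega), zero_mul]
  have e3 : ∑ t ∈ Finset.Ico (n-m) n, c ((s*t)%n) * x ^ q ^ ((s*t)%n)
      = ∑ i ∈ Finset.Icc 1 m, (b i * x) ^ q ^ (s * (n - i)) := by
    rw [icc_reflect m, Finset.sum_Ico_eq_sum_range, (show n - (n-m) = m by omega)]
    refine Finset.sum_congr rfl ?_
    intro k hk
    have hk' : k < m := Finset.mem_range.mp hk
    rw [h3 (n - m + k) (by omega) (by omega), (show n - (n - m + k) = m - k by omega),
      ← mul_pow, ← pow_q_mod hF (b (m-k) * x) (s*(n - m + k)),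
      (show n - m + k = n - (m - k) by omega)]
  rw [e0, e1, e2, e3, Finset.sum_add_distrib]
  ring

/-- The Schmidt code `S_{n,d,s}` equals `G' ∩ S_n(q)`, where
`G' = G_{n,n-d+1,s} ∘ x^(q^(s(n+d)/2))` and `S_n(q)` is the space of self-adjoint
linearized polynomials (all viewed as functions on `F_{qⁿ}`). -/
theorem stmt_13 (q n d s : ℕ) (hq : IsPrimePow q) (hn : 2 ≤ n)
    (hd1 : 1 ≤ d) (hdn : d ≤ n) (hpar : Even (n - d)) (hs : Nat.gcd s n = 1)
    (F : Type) [Field F] [Fintype F] (hF : Fintype.card F = q ^ n) :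
    {f : F → F | ∃ b : ℕ → F, ∀ x : F,
        f x = b 0 * x + ∑ i ∈ Finset.Icc 1 ((n - d) / 2),
          (b i * x ^ q ^ (s * i) + (b i * x) ^ q ^ (s * (n - i)))}
    = {f : F → F | ∃ a : ℕ → F, ∀ x : F,
          f x = ∑ i ∈ Finset.range (n - d + 1), a i * x ^ q ^ (s * (i + (n + d) / 2))}
      ∩ {f : F → F | ∃ c : ℕ → F,
          (∀ i < n, c ((n - i) % n) = c i ^ q ^ ((n - i) % n)) ∧
          ∀ x : F, f x = ∑ i ∈ Finset.range n, c i * x ^ q ^ i} := by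
  obtain ⟨m, hm⟩ := hpar
  have hq2 : 2 ≤ q := hq.two_le
  have hn0 : 0 < n := by omega
  have hmm : m + m < n := by omega
  have hnd2 : (n - d) / 2 = m := by omega
  have hnd1 : n - d + 1 = m + m + 1 := by omega
  have hnp2 : (n + d) / 2 = n - m := by omega
  have hcop : Nat.Coprime s n := hs
  set s' := s ^ (n.totient - 1) with hs'def
  have hs' : (s * s') % n = 1 := by
    have h1 : s * s' = s ^ n.totient := by
      rw [hs'def, ← pow_succ']
      congr 1
      have : 0 < n.totient := Nat.totient_pos.mpr hn0
      omega
    rw [h1]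
    calc s ^ n.totient % n = 1 % n := Nat.ModEq.pow_totient hcop
      _ = 1 := Nat.mod_eq_of_lt (by omega)
  ext f
  simp only [Set.mem_setOf_eq, Set.mem_inter_iff, hnd2, hnd1, hnp2]
  constructor
  · rintro ⟨b, hb⟩
    constructor
    · -- Gabidulin membership
      refine ⟨fun j => if j < m then b (m - j) ^ q ^ (s * (n - (m - j)))
        else if j = m then b 0 else b (j - m), fun x => ?_⟩
      rw [hb x]
      rw [Finset.range_eq_Ico,
        ← Finset.sum_Ico_consecutive _ (by omega : (0:ℕ) ≤ m+1) (by omega : m+1 ≤ m+m+1),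
        ← Finset.sum_Ico_consecutive _ (by omega : (0:ℕ) ≤ m) (by omega : m ≤ m+1)]
      have p1 : ∑ j ∈ Finset.Ico 0 m,
          (if j < m then b (m - j) ^ q ^ (s * (n - (m - j))) else if j = m then b 0 else b (j - m))
            * x ^ q ^ (s * (j + (n - m)))
          = ∑ i ∈ Finset.Icc 1 m, (b i * x) ^ q ^ (s * (n - i)) := by
        rw [icc_reflect m, Finset.sum_Ico_eq_sum_range, (show m - 0 = m by omega)]
        refine Finset.sum_congr rfl ?_
        intro k hk
        have hk' : k < m := Finset.mem_range.mp hk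
        rw [(show 0 + k = k by omega), if_pos hk',
          (show k + (n - m) = n - (m - k) by omega), ← mul_pow]
      have p2 : ∑ j ∈ Finset.Ico m (m+1),
          (if j < m then b (m - j) ^ q ^ (s * (n - (m - j))) else if j = m then b 0 else b (j - m))
            * x ^ q ^ (s * (j + (n - m)))
          = b 0 * x := by
        rw [Finset.sum_Ico_eq_sum_range, (show m + 1 - m = 1 by omega), Finset.sum_range_one,
          (show m + 0 = m by omega), if_neg (lt_irrefl m), if_pos rfl,
          (show m + (n - m) = n by omega), pow_q_mod hF x (s*n), Nat.mul_mod_left, pow_zero,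
          pow_one]
      have p3 : ∑ j ∈ Finset.Ico (m+1) (m+m+1),
          (if j < m then b (m - j) ^ q ^ (s * (n - (m - j))) else if j = m then b 0 else b (j - m))
            * x ^ q ^ (s * (j + (n - m)))
          = ∑ i ∈ Finset.Icc 1 m, b i * x ^ q ^ (s * i) := by
        rw [Finset.sum_Ico_eq_sum_range, (show m+m+1-(m+1) = m by omega),
          ← Finset.Ico_add_one_right_eq_Icc, Finset.sum_Ico_eq_sum_range, (show m+1-1 = m by omega)]
        refine Finset.sum_congr rfl ?_
        intro k hk
        have hk' : k < m := Finset.mem_range.mp hk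
        rw [if_neg (by omega), if_neg (by omega), (show m + 1 + k - m = 1 + k by omega),
          (show m + 1 + k + (n - m) = n + (1 + k) by omega),
          (show s * (n + (1 + k)) = n * s + s * (1 + k) by ring),
          pow_q_mod hF x (n*s + s*(1+k)), Nat.mul_add_mod, ← pow_q_mod hF x (s*(1+k))]
      rw [p1, p2, p3, Finset.sum_add_distrib]
      ring
    · -- self-adjoint membership
      refine ⟨fun j => if (s' * j) % n = 0 then b 0
        else if (s' * j) % n ≤ m then b ((s' * j) % n)
        else if n - (s' * j) % n ≤ m then b (n - (s' * j) % n) ^ q ^ j else 0, ?_, ?_⟩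
      · -- adjointness
        intro i hi
        by_cases hi0 : i = 0
        · subst hi0
          rw [Nat.sub_zero, Nat.mod_self, pow_zero, pow_one]
        · rw [Nat.mod_eq_of_lt (by omega : n - i < n)]
          simp only []
          have hs'' : (s' * s) % n = 1 := by rwa [mul_comm] at hs'
          set α := (s' * i) % n with hα
          have hαlt : α < n := Nat.mod_lt _ hn0
          have hα0 : α ≠ 0 := by
            intro h0
            have := scancel hs'' hn0 i 0 (by rw [mul_zero, Nat.zero_mod, ← hα, h0])
            rw [Nat.mod_eq_of_lt hi, Nat.zero_mod] at this
            exact hi0 this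
          have hβ : (s' * (n - i)) % n = n - α := by
            have hmod : ((s' * (n - i)) % n + α) % n = 0 := by
              rw [hα, ← Nat.add_mod, ← Nat.mul_add, (show n - i + i = n by omega),
                Nat.mul_mod_left]
            have hblt : (s' * (n - i)) % n < n := Nat.mod_lt _ hn0
            have := mod_zero_bound hmod (by omega) (by omega)
            omega
          rw [hβ]
          by_cases hc1 : α ≤ m
          · rw [if_neg hα0, if_pos hc1, if_neg (by omega), if_neg (by omega),
              if_pos (by omega : n - (n - α) ≤ m), (show n - (n - α) = α by omega)]
          · by_cases hc2 : n - α ≤ m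
            · rw [if_neg hα0, if_neg hc1, if_pos hc2, if_neg (by omega), if_pos hc2,
                ← pow_mul, ← pow_add, (show i + (n - i) = n by omega), pow_qn hF]
            · rw [if_neg hα0, if_neg hc1, if_neg hc2, if_neg (by omega), if_neg (by omega),
                if_neg (by omega), zero_pow (by positivity)]
      · -- sum formula
        intro x
        rw [hb x]
        refine (sum_formula hF hn hs' hmm b _ ?_ ?_ ?_ ?_ x).symm
        · simp
        · intro t h1t h2t
          rw [einv hs' t (by omega), if_neg (by omega), if_pos (by omega)]
        · intro t h1t h2t
          rw [einv hs' t (by omega), if_neg (by omega), if_neg (by omega), if_neg (by omega)]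
        · intro t h1t h2t
          rw [einv hs' t (by omega), if_neg (by omega), if_neg (by omega), if_pos (by omega)]
  · rintro ⟨⟨a, ha⟩, c, hadj, hcs⟩
    refine ⟨fun i => c ((s * i) % n), ?_⟩
    have hc' : ∀ j < n, c j
        = ∑ k ∈ Finset.range (m+m+1), (if (s*(k+(n-m)))%n = j then a k else 0) := by
      refine indep2 hF hq2 (by omega) c _ (fun x => ?_)
      calc ∑ j ∈ Finset.range n, c j * x ^ q ^ j = f x := (hcs x).symm
        _ = ∑ k ∈ Finset.range (m+m+1), a k * x ^ q ^ (s*(k+(n-m))) := ha x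
        _ = ∑ k ∈ Finset.range (m+m+1), a k * x ^ q ^ ((s*(k+(n-m)))%n) :=
            Finset.sum_congr rfl fun k _ => by rw [← pow_q_mod hF]
        _ = ∑ k ∈ Finset.range (m+m+1), ∑ j ∈ Finset.range n,
              (if (s*(k+(n-m)))%n = j then a k * x ^ q ^ j else 0) :=
            (Finset.sum_congr rfl fun k _ => by
              rw [Finset.sum_ite_eq, if_pos (Finset.mem_range.mpr (Nat.mod_lt _ hn0))]).symm
        _ = ∑ j ∈ Finset.range n,
              (∑ k ∈ Finset.range (m+m+1), if (s*(k+(n-m)))%n = j then a k else 0)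
                * x ^ q ^ j := by
            rw [Finset.sum_comm]
            refine Finset.sum_congr rfl fun j _ => ?_
            rw [Finset.sum_mul]
            refine Finset.sum_congr rfl fun k _ => ?_
            rw [ite_mul, zero_mul]
    have hvan : ∀ t, m < t → t < n - m → c ((s*t)%n) = 0 := by
      intro t h1t h2t
      rw [hc' _ (Nat.mod_lt _ hn0)]
      refine Finset.sum_eq_zero fun k hk => ?_
      rw [if_neg ?_]
      intro hEq
      have hkk : k < m + m + 1 := Finset.mem_range.mp hk
      have := scancel hs' hn0 (k + (n - m)) t hEq
      rw [Nat.mod_eq_of_lt (by omega : t < n)] at this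
      rcases Nat.lt_or_ge (k + (n-m)) n with h4 | h4
      · rw [Nat.mod_eq_of_lt h4] at this; omega
      · rw [Nat.mod_eq_sub_mod h4, Nat.mod_eq_of_lt (by omega)] at this; omega
    have hb3 : ∀ t, n - m ≤ t → t < n → c ((s*t)%n) = c ((s*(n-t))%n) ^ q ^ ((s*t)%n) := by
      intro t h1t h2t
      set i0 := (s * (n - t)) % n with hi0
      have hi0n : i0 < n := Nat.mod_lt _ hn0
      have hi00 : i0 ≠ 0 := by
        intro h0
        have := scancel hs' hn0 (n - t) 0 (by rw [mul_zero, Nat.zero_mod, ← hi0, h0])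
        rw [Nat.mod_eq_of_lt (by omega), Nat.zero_mod] at this
        omega
      have hstlt : (s*t)%n < n := Nat.mod_lt _ hn0
      have hkey : (n - i0) % n = (s * t) % n := by
        have hmod : ((s*t)%n + i0) % n = 0 := by
          rw [hi0, ← Nat.add_mod, ← Nat.mul_add, (show t + (n - t) = n by omega),
            Nat.mul_mod_left]
        have h2 : (s*t)%n + i0 = n := mod_zero_bound hmod (by omega) (by omega)
        rw [Nat.mod_eq_of_lt (by omega : n - i0 < n)]
        omega
      have := hadj i0 hi0n
      rw [hkey] at this
      exact this
    intro x
    rw [hcs x]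
    refine sum_formula hF hn hs' hmm (fun i => c ((s * i) % n)) c ?_ (fun t _ _ => rfl)
      hvan hb3 x
    simp
end

section
/- Suppose n is odd, d = 2e with 2 ≤ d ≤ n-1, and gcd(s,n) = 1. The Delsarte–Goethals alternating code A_{n,d,s} = { Σ_{i=e}^{(n-1)/2} ( b_i x^{q^{si}} − (b_i x)^{q^{s(n-i)}} ) : b_e, ..., b_{(n-1)/2} ∈ F_{q^n} } equals the intersection of G' with A_n(q), where G' = G_{n,n-d+1,s} ∘ x^{q^{sd/2}}, and A_n(q) = { Σ_{i=1}^{n-1} c_i x^{q^i} : c_{n-i} = −c_i^{q^{n-i}} } is the space of alternating linearized polynomials. -/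
/-!
On `F = 𝔽_{qⁿ}` one has `x ^ q ^ a = x ^ q ^ (a % n)`, and since `gcd(s, n) = 1` the residues of
`s * j` for `e ≤ j ≤ n - e` are distinct, with `j ↦ n - j` acting as `r ↦ n - r`. Each binomial
`b x^{q^{sj}} - (b x)^{q^{s(n-j)}}` is visibly in `G'`, and lies in `A_n(q)` with coefficients
`b` at `r` and `-b^{q^{n-r}}` at `n - r`; `A_n(q)` is additive because `x ↦ x^q` is a power of
Frobenius. Conversely, a `q`-polynomial with exponents `< qⁿ = |F|` is determined by its values,
so comparing coefficients of an element of `G' ∩ A_n(q)` gives `a_{j-e} = c_{sj mod n}`, and the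
alternating relation `c_{n-r} = -c_r^{q^{n-r}}` regroups the terms `j` and `n - j` into binomials.
-/

open Finset Polynomial

section Residues

variable {n s j : ℕ}

lemma mul_mod_pos_of_coprime (hs : s.Coprime n) (hj0 : 0 < j) (hjn : j < n) : 0 < s * j % n := by
  refine Nat.pos_of_ne_zero fun h => ?_
  have : n ∣ j := hs.symm.dvd_of_dvd_mul_left (Nat.dvd_of_mod_eq_zero h)
  exact (Nat.le_of_dvd hj0 this).not_gt hjn

lemma mul_sub_mod_of_coprime (hs : s.Coprime n) (hj0 : 0 < j) (hjn : j < n) :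
    s * (n - j) % n = n - s * j % n := by
  have hsum : (s * j % n + s * (n - j) % n) % n = 0 := by
    rw [← Nat.add_mod, ← Nat.mul_add, Nat.add_sub_cancel' hjn.le, Nat.mul_mod_left]
  have h1 := mul_mod_pos_of_coprime hs hj0 hjn
  have h2 := mul_mod_pos_of_coprime hs (Nat.sub_pos_of_lt hjn) (Nat.sub_lt (by omega) hj0)
  have h3 := Nat.mod_lt (s * j) (by omega : 0 < n)
  have h4 := Nat.mod_lt (s * (n - j)) (by omega : 0 < n)
  have := Nat.eq_of_dvd_of_lt_two_mul (by omega) (Nat.dvd_of_mod_eq_zero hsum) (by omega)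
  omega

lemma mul_mod_injOn_of_coprime (hs : s.Coprime n) :
    Set.InjOn (fun j => s * j % n) (Set.Iio n) := fun i hi j hj hij => by
  have := Nat.ModEq.cancel_left_of_coprime hs.symm hij
  rwa [Nat.ModEq, Nat.mod_eq_of_lt hi, Nat.mod_eq_of_lt hj] at this

end Residues

lemma sum_range_shift_eq_sum_Icc_add_reflect {M : Type*} [AddCommMonoid M] {n e : ℕ}
    (hn : Odd n) (hen : 2 * e < n) (g : ℕ → M) :
    ∑ i ∈ range (n - 2 * e + 1), g (i + e) = ∑ j ∈ Icc e ((n - 1) / 2), (g j + g (n - j)) := by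
  obtain ⟨k, rfl⟩ := hn
  rw [show (2 * k + 1 - 1) / 2 = k by omega]
  have hsplit : Ico e (2 * k + 2 - e) = Icc e k ∪ Ioc k (2 * k + 1 - e) := by
    ext j; simp only [mem_Ico, mem_Icc, mem_union, mem_Ioc]; omega
  have hreflect : ∑ j ∈ Ioc k (2 * k + 1 - e), g j = ∑ j ∈ Icc e k, g (2 * k + 1 - j) := by
    refine sum_nbij' (fun j => 2 * k + 1 - j) (fun j => 2 * k + 1 - j) ?_ ?_ ?_ ?_ ?_ <;>
      intro j hj <;> simp only [mem_Icc, mem_Ioc] at hj ⊢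
    all_goals first | omega | (congr 1; omega)
  rw [sum_add_distrib, ← hreflect, ← sum_union (disjoint_left.2 fun j h1 h2 => by
    simp only [mem_Icc, mem_Ioc] at h1 h2; omega), ← hsplit, sum_Ico_eq_sum_range]
  refine sum_congr (by congr 1; omega) fun i _ => by rw [add_comm]

section LinearizedPolynomials

variable {F : Type*} [Field F] [Fintype F] {q n : ℕ}

lemma pow_pow_eq_pow_pow_mod (hF : Fintype.card F = q ^ n) (y : F) (a : ℕ) :
    y ^ q ^ a = y ^ q ^ (a % n) := by
  conv_lhs => rw [← Nat.mod_add_div a n, pow_add, pow_mul, pow_mul, ← hF,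
    FiniteField.pow_card_pow]

lemma add_pow_pow (hq : IsPrimePow q) (hF : Fintype.card F = q ^ n) (t : ℕ) (a b : F) :
    (a + b) ^ q ^ t = a ^ q ^ t + b ^ q ^ t := by
  obtain ⟨p, v, hp, -, rfl⟩ := hq
  have : Fact p.Prime := ⟨hp.nat_prime⟩
  have : CharP F p := charP_of_card_eq_prime_pow (hF.trans (pow_mul p v n).symm)
  rw [← pow_mul]
  exact add_pow_char_pow a b p (v * t)

lemma neg_pow_pow (hq : IsPrimePow q) (hF : Fintype.card F = q ^ n) (t : ℕ) (a : F) :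
    (-a) ^ q ^ t = -(a ^ q ^ t) := by
  rw [eq_neg_iff_add_eq_zero, ← add_pow_pow hq hF, neg_add_cancel,
    zero_pow (pow_ne_zero t hq.ne_zero)]

lemma eq_of_forall_sum_pow_pow_eq (hq : 2 ≤ q) (hF : Fintype.card F = q ^ n) {c c' : ℕ → F}
    (h : ∀ x : F, ∑ m ∈ range n, c m * x ^ q ^ m = ∑ m ∈ range n, c' m * x ^ q ^ m)
    {m : ℕ} (hm : m < n) : c m = c' m := by
  let P : (ℕ → F) → F[X] := fun c => ∑ m ∈ range n, C (c m) * X ^ q ^ m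
  have hdeg (c : ℕ → F) : (P c).natDegree < Fintype.card F := by
    rw [hF]
    refine lt_of_le_of_lt (natDegree_sum_le_of_forall_le _ _ (n := q ^ (n - 1)) fun i hi => ?_)
      (Nat.pow_lt_pow_right hq (by omega))
    refine (natDegree_C_mul_X_pow_le _ _).trans (Nat.pow_le_pow_right (by omega) ?_)
    simp only [mem_range] at hi; omega
  have hcoeff (c : ℕ → F) : (P c).coeff (q ^ m) = c m := by
    simp only [P, finsetSum_coeff, coeff_C_mul_X_pow,
      (Nat.pow_right_injective hq).eq_iff, sum_ite_eq, mem_range, if_pos hm]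
  have hP : P c = P c' := eq_of_natDegree_lt_card_of_eval_eq _ _ Function.injective_id
    (fun x => by simpa [P, eval_finsetSum] using h x) (max_lt (hdeg c) (hdeg c'))
  rw [← hcoeff c, hP, hcoeff]

lemma coeff_eq_of_forall_sum_pow_pow_eq (hq : 2 ≤ q) (hF : Fintype.card F = q ^ n)
    {c a : ℕ → F} {T : Finset ℕ} {E : ℕ → ℕ} (hE : Set.InjOn (fun j => E j % n) T)
    (h : ∀ x : F, ∑ m ∈ range n, c m * x ^ q ^ m = ∑ j ∈ T, a j * x ^ q ^ E j)
    {j : ℕ} (hj : j ∈ T) : c (E j % n) = a j := by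
  classical
  have hn : 0 < n := Nat.pos_of_ne_zero <| by
    rintro rfl
    exact Fintype.one_lt_card.ne' (hF.trans (pow_zero q))
  have hmaps : ∀ i ∈ T, E i % n ∈ range n := fun i _ => mem_range.2 (Nat.mod_lt _ hn)
  have hfiber : ∀ x : F, ∑ m ∈ range n, c m * x ^ q ^ m
      = ∑ m ∈ range n, (∑ i ∈ T with E i % n = m, a i) * x ^ q ^ m := fun x => by
    simp_rw [h x, sum_mul]
    rw [← sum_fiberwise_of_maps_to hmaps]
    refine sum_congr rfl fun m _ => sum_congr rfl fun i hi => ?_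
    rw [(mem_filter.1 hi).2.symm, ← pow_pow_eq_pow_pow_mod hF]
  rw [eq_of_forall_sum_pow_pow_eq hq hF hfiber (Nat.mod_lt _ hn)]
  refine sum_eq_single_of_mem j (mem_filter.2 ⟨hj, rfl⟩) fun i hi hij => ?_
  exact absurd (hE (mem_filter.1 hi).1 hj (mem_filter.1 hi).2) hij

variable (q n) in
/-- `A_n(q)`. -/
def alternatingLinearized : Set (F → F) :=
  {f | ∃ c : ℕ → F, c 0 = 0 ∧ (∀ i, 1 ≤ i → i < n → c (n - i) = -(c i ^ q ^ (n - i))) ∧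
    ∀ x, f x = ∑ i ∈ range n, c i * x ^ q ^ i}

lemma sum_mem_alternatingLinearized (hq : IsPrimePow q) (hF : Fintype.card F = q ^ n)
    {ι : Type*} (S : Finset ι) {f : ι → F → F} (hf : ∀ j ∈ S, f j ∈ alternatingLinearized q n) :
    ∑ j ∈ S, f j ∈ alternatingLinearized q n := by
  refine sum_induction f (· ∈ alternatingLinearized q n) ?_ ?_ hf
  · rintro f g ⟨c, hc0, hc, hcf⟩ ⟨c', hc0', hc', hcf'⟩
    refine ⟨c + c', by simp [hc0, hc0'], fun i hi hin => ?_, fun x => ?_⟩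
    · simp only [Pi.add_apply, hc i hi hin, hc' i hi hin, add_pow_pow hq hF, neg_add]
    · simp only [Pi.add_apply, hcf x, hcf' x, add_mul, sum_add_distrib]
  · exact ⟨0, rfl, fun i _ _ => by simp [zero_pow (pow_ne_zero _ hq.ne_zero)], fun x => by simp⟩

lemma binomial_mem_alternatingLinearized (hq : IsPrimePow q) (hF : Fintype.card F = q ^ n)
    {r : ℕ} (hr0 : 0 < r) (hrn : r < n) (hr : 2 * r ≠ n) (b : F) :
    (fun x => b * x ^ q ^ r - (b * x) ^ q ^ (n - r)) ∈ alternatingLinearized q n := by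
  classical
  have hrr : r ≠ n - r := by omega
  have hrr' : n - r ≠ r := by omega
  refine ⟨fun i => (if i = r then b else 0) + (if i = n - r then -(b ^ q ^ (n - r)) else 0),
    by simp [hr0.ne, show 0 ≠ n - r by omega], fun i hi hin => ?_, fun x => ?_⟩
  · by_cases hir : i = r
    · simp [hir, hrr, hrr']
    by_cases hinr : i = n - r
    · subst hinr
      simp only [Nat.sub_sub_self hrn.le, hrr, hrr', if_true, if_false, zero_add, add_zero,
        neg_pow_pow hq hF, neg_neg, ← pow_mul, ← pow_add, Nat.sub_add_cancel hrn.le, ← hF,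
        FiniteField.pow_card]
    · simp [hir, hinr, show n - i ≠ r by omega, show n - i ≠ n - r by omega,
        zero_pow (pow_ne_zero _ hq.ne_zero)]
  · simp only [add_mul, sum_add_distrib, ite_mul, zero_mul, sum_ite_eq', mem_range, hrn,
      show n - r < n by omega, if_true, mul_pow, neg_mul, sub_eq_add_neg]

end LinearizedPolynomials

section DelsarteGoethals

variable {F : Type*} [Field F] {q n e s : ℕ}

variable (q n e s) in
/-- `A_{n,2e,s}`. -/
def delsarteGoethalsAlternating : Set (F → F) :=
  {f | ∃ b : ℕ → F, ∀ x, f x = ∑ i ∈ Icc e ((n - 1) / 2),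
    (b i * x ^ q ^ (s * i) - (b i * x) ^ q ^ (s * (n - i)))}

variable (q n s) in
/-- `G_{n,n-d+1,s} ∘ x^{q^{sd/2}}`. -/
def shiftedGabidulin (d : ℕ) : Set (F → F) :=
  {f | ∃ a : ℕ → F, ∀ x, f x = ∑ i ∈ range (n - d + 1), a i * x ^ q ^ (s * (i + d / 2))}

lemma delsarteGoethalsAlternating_subset_shiftedGabidulin (hn : Odd n) (hen : 2 * e < n) :
    delsarteGoethalsAlternating (F := F) q n e s ⊆ shiftedGabidulin q n s (2 * e) := by
  rintro f ⟨b, hb⟩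
  -- exponent `s * j` with `j ≤ (n - 1) / 2` comes from `b j`, otherwise from the reflected term
  refine ⟨fun i => if i + e ≤ (n - 1) / 2 then b (i + e)
    else -(b (n - (i + e)) ^ q ^ (s * (i + e))), fun x => ?_⟩
  rw [hb x, Nat.mul_div_cancel_left e two_pos]
  refine Eq.trans ?_ (sum_range_shift_eq_sum_Icc_add_reflect hn hen fun j =>
    (if j ≤ (n - 1) / 2 then b j else -(b (n - j) ^ q ^ (s * j))) * x ^ q ^ (s * j)).symm
  refine sum_congr rfl fun j hj => ?_
  have hj := mem_Icc.1 hj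
  obtain ⟨k, rfl⟩ := hn
  rw [if_pos hj.2, if_neg (by omega), Nat.sub_sub_self (by omega), mul_pow]
  ring

lemma delsarteGoethalsAlternating_subset_alternatingLinearized [Fintype F] (hq : IsPrimePow q)
    (hF : Fintype.card F = q ^ n) (hn : Odd n) (hs : s.Coprime n) (he : 0 < e) :
    delsarteGoethalsAlternating (F := F) q n e s ⊆ alternatingLinearized q n := by
  rintro f ⟨b, hb⟩
  have hf : f = ∑ j ∈ Icc e ((n - 1) / 2),
      fun x => b j * x ^ q ^ (s * j) - (b j * x) ^ q ^ (s * (n - j)) := by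
    ext x
    rw [hb x, Finset.sum_apply]
  rw [hf]
  refine sum_mem_alternatingLinearized hq hF _ fun j hj => ?_
  have hj := mem_Icc.1 hj
  obtain ⟨k, rfl⟩ := hn
  have hr0 := mul_mod_pos_of_coprime hs (j := j) (by omega) (by omega)
  have hrn := Nat.mod_lt (s * j) (by omega : 0 < 2 * k + 1)
  convert binomial_mem_alternatingLinearized hq hF hr0 hrn (by omega) (b j) using 1
  ext x
  rw [pow_pow_eq_pow_pow_mod hF x (s * j), pow_pow_eq_pow_pow_mod hF (b j * x),
    mul_sub_mod_of_coprime hs (by omega) (by omega)]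

lemma shiftedGabidulin_inter_alternatingLinearized_subset [Fintype F] (hq : 2 ≤ q)
    (hF : Fintype.card F = q ^ n) (hn : Odd n) (hs : s.Coprime n) (he : 0 < e)
    (hen : 2 * e < n) :
    shiftedGabidulin q n s (2 * e) ∩ alternatingLinearized q n
      ⊆ delsarteGoethalsAlternating (F := F) q n e s := by
  rintro f ⟨⟨a, ha⟩, c, -, hc, hcf⟩
  rw [Nat.mul_div_cancel_left e two_pos] at ha
  have hcoeff : ∀ i ∈ range (n - 2 * e + 1), c (s * (i + e) % n) = a i := by
    refine fun i hi => coeff_eq_of_forall_sum_pow_pow_eq hq hF ?_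
      (fun x => (hcf x).symm.trans (ha x)) hi
    intro i hi i' hi' h
    simp only [coe_range, Set.mem_Iio] at hi hi'
    have := mul_mod_injOn_of_coprime hs (show i + e < n by omega) (show i' + e < n by omega) h
    omega
  refine ⟨fun j => c (s * j % n), fun x => ?_⟩
  calc f x = ∑ i ∈ range (n - 2 * e + 1), c (s * (i + e) % n) * x ^ q ^ (s * (i + e)) :=
        (ha x).trans (sum_congr rfl fun i hi => by rw [hcoeff i hi])
    _ = _ := sum_range_shift_eq_sum_Icc_add_reflect hn hen fun j => c (s * j % n) * x ^ q ^ (s * j)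
    _ = _ := sum_congr rfl fun j hj => ?_
  have hj := mem_Icc.1 hj
  obtain ⟨k, rfl⟩ := hn
  have hr0 := mul_mod_pos_of_coprime hs (j := j) (by omega) (by omega)
  have hrn := Nat.mod_lt (s * j) (by omega : 0 < 2 * k + 1)
  rw [mul_sub_mod_of_coprime hs (by omega) (by omega), hc _ hr0 hrn, mul_pow,
    pow_pow_eq_pow_pow_mod hF (c _) (s * (2 * k + 1 - j)),
    mul_sub_mod_of_coprime hs (by omega) (by omega)]
  ring

end DelsarteGoethals

/-- The Delsarte–Goethals alternating code `A_{n,d,s}` (with `n` odd, `d = 2e`)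
equals `G' ∩ A_n(q)`, where `G' = G_{n,n-d+1,s} ∘ x^(q^(sd/2))` and `A_n(q)` is the
space of alternating linearized polynomials (all viewed as functions on `F_{qⁿ}`). -/
theorem stmt_14 (q n d e s : ℕ) (hq : IsPrimePow q) (hodd : Odd n)
    (hde : d = 2 * e) (hd2 : 2 ≤ d) (hdn : d ≤ n - 1) (hs : Nat.gcd s n = 1)
    (F : Type) [Field F] [Fintype F] (hF : Fintype.card F = q ^ n) :
    {f : F → F | ∃ b : ℕ → F, ∀ x : F,
        f x = ∑ i ∈ Finset.Icc e ((n - 1) / 2),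
          (b i * x ^ q ^ (s * i) - (b i * x) ^ q ^ (s * (n - i)))}
    = {f : F → F | ∃ a : ℕ → F, ∀ x : F,
          f x = ∑ i ∈ Finset.range (n - d + 1), a i * x ^ q ^ (s * (i + d / 2))}
      ∩ {f : F → F | ∃ c : ℕ → F, c 0 = 0 ∧
          (∀ i, 1 ≤ i → i < n → c (n - i) = -(c i ^ q ^ (n - i))) ∧
          ∀ x : F, f x = ∑ i ∈ Finset.range n, c i * x ^ q ^ i} := by
  subst hde
  have he : 0 < e := by omega
  have hen : 2 * e < n := by omega
  exact Set.Subset.antisymm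
    (fun f hf => ⟨delsarteGoethalsAlternating_subset_shiftedGabidulin hodd hen hf,
      delsarteGoethalsAlternating_subset_alternatingLinearized hq hF hodd hs he hf⟩)
    (shiftedGabidulin_inter_alternatingLinearized_subset hq.two_le hF hodd hs he hen)
end

section
/- Let q be odd, m ≥ 2, n = 2m, and let η ∈ F_{q^{2m}} be such that the norm N_{q^{2m}/q}(η) is a non-square in F_q. Then every nonzero element of the set S = { a_0 x + Σ_{j=1}^{m-2} a_j x^{q^{sj}} + η b x^{q^{s(m-1)}} + a x^{q^{sm}} + η^{q^{s(m+1)}} b^{q^s} x^{q^{s(m+1)}} + Σ_{j=1}^{m-2} (a_j x)^{q^{s(2m-j)}} : a_0,...,a_{m-2} ∈ F_{q^{2m}}, a, b ∈ F_{q^m} } has rank at least 2 as an F_q-endomorphism of F_{q^{2m}}; i.e., no nonzero element of S has rank 1. -/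
/-!
A rank-one `F_q`-linear map of `F_{q^n}` is `x ↦ u Tr(v x) = ∑ᵢ u v^(q^i) x^(q^i)`, so all of its
coefficients as a `q`-polynomial have the same norm `N(u) N(v)`. Since `gcd(s, 2m) = 1`, the
exponents `s k`, `k < 2m`, are distinct modulo `2m`, and Dedekind's independence of the maps
`x ↦ x^(q^(sk))` lets one compare coefficients: those of `x^(q^(s(m-1)))` and `x^(q^(sm))` give
`N(η b) = N(a)`, i.e. `N(η) = N(a / b)`. But `a / b ∈ F_{q^m}`, and the norm of an element of
`F_{q^m}` is a square in `F_q`.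
-/

open Finset Module

theorem pow_pow_eq_pow_pow_mod_s17 {M : Type*} [Monoid M] {c : M} {q m : ℕ} (h : c ^ q ^ m = c)
    (e : ℕ) : c ^ q ^ e = c ^ q ^ (e % m) := by
  have hfix : c ^ (q ^ m) ^ (e / m) = c := by
    rw [← congrFun (pow_iterate _ _) c]; exact Function.iterate_fixed h _
  calc c ^ q ^ e = (c ^ (q ^ m) ^ (e / m)) ^ q ^ (e % m) := by
        rw [← pow_mul, ← pow_mul, ← pow_add, Nat.div_add_mod]
    _ = c ^ q ^ (e % m) := by rw [hfix]

theorem Nat.injOn_mul_mod {s n : ℕ} (hs : s.Coprime n) :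
    Set.InjOn (fun k => s * k % n) (range n) := by
  intro i hi j hj hij
  rw [coe_range, Set.mem_Iio] at hi hj
  have := Nat.ModEq.cancel_left_of_coprime (by rwa [Nat.gcd_comm]) hij
  rwa [Nat.ModEq, Nat.mod_eq_of_lt hi, Nat.mod_eq_of_lt hj] at this

theorem Finset.sum_range_mul_mod {M : Type*} [AddCommMonoid M] {s n : ℕ} (hs : s.Coprime n)
    (f : ℕ → M) : ∑ k ∈ range n, f (s * k % n) = ∑ k ∈ range n, f k := by
  have hmaps : Set.MapsTo (fun k => s * k % n) (range n) (range n) := fun k hk =>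
    mem_range.2 (Nat.mod_lt _ (pos_of_ne_zero (by rintro rfl; simp at hk)))
  exact sum_nbij _ hmaps (Nat.injOn_mul_mod hs)
    (surjOn_of_injOn_of_card_le _ hmaps (Nat.injOn_mul_mod hs) le_rfl) fun _ _ => rfl

theorem LinearMap.exists_eq_trace_smul_of_finrank_range_eq_one {K F : Type*} [Field K] [Field F]
    [Algebra K F] [FiniteDimensional K F] [Algebra.IsSeparable K F] {φ : F →ₗ[K] F}
    (h : finrank K (range φ) = 1) : ∃ u v : F, ∀ x, φ x = Algebra.trace K F (v * x) • u := by
  let e : range φ ≃ₗ[K] K := LinearEquiv.ofFinrankEq _ _ (by rw [h, finrank_self])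
  let v := ((Algebra.traceForm K F).toDual (traceForm_nondegenerate K F)).symm
    (e.toLinearMap ∘ₗ φ.rangeRestrict)
  refine ⟨e.symm 1, v, fun x => ?_⟩
  have hv : Algebra.trace K F (v * x) = e (φ.rangeRestrict x) := by
    rw [← Algebra.traceForm_apply, LinearMap.BilinForm.apply_toDual_symm_apply]; rfl
  rw [hv, ← Submodule.coe_smul, ← map_smul, smul_eq_mul, mul_one, LinearEquiv.symm_apply_apply]
  rfl

namespace FiniteField

variable {K F : Type*} [Field K] [Fintype K] [Field F] [Algebra K F]

local notation "q" => Fintype.card K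

theorem norm_pow_card_pow (x : F) (i : ℕ) : Algebra.norm K (x ^ q ^ i) = Algebra.norm K x := by
  rw [map_pow, pow_card_pow]

variable [Fintype F]

theorem finrank_eq_of_card_eq_pow {n : ℕ} (h : Fintype.card F = q ^ n) : finrank K F = n :=
  Nat.pow_right_injective (Fintype.one_lt_card (α := K)) <| by
    dsimp only; rw [← card_eq_pow_finrank, h]

theorem pow_card_pow_finrank (x : F) : x ^ q ^ finrank K F = x := by
  rw [← card_eq_pow_finrank, pow_card]

theorem mod_finrank_eq_of_forall_pow_card_pow_eq {i j : ℕ} (h : ∀ x : F, x ^ q ^ i = x ^ q ^ j) :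
    i % finrank K F = j % finrank K F := by
  have : frobeniusAlgEquivOfAlgebraic K F ^ i = frobeniusAlgEquivOfAlgebraic K F ^ j :=
    AlgEquiv.ext fun x => by
      simp only [AlgEquiv.coe_pow, coe_frobeniusAlgEquivOfAlgebraic_iterate, h]
  rwa [pow_eq_pow_iff_modEq, orderOf_frobeniusAlgEquivOfAlgebraic] at this

theorem eq_of_forall_sum_mul_pow_card_pow_eq {ι : Type*} {T : Finset ι} {e : ι → ℕ}
    (he : Set.InjOn (fun k => e k % finrank K F) T) {A B : ι → F}
    (h : ∀ x : F, ∑ k ∈ T, A k * x ^ q ^ e k = ∑ k ∈ T, B k * x ^ q ^ e k) :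
    ∀ k ∈ T, A k = B k := by
  let χ : ι → (F →* F) := fun k => powMonoidHom (q ^ e k)
  have hχ : Set.InjOn χ T := fun i hi j hj hij =>
    he hi hj (mod_finrank_eq_of_forall_pow_card_pow_eq fun x => DFunLike.congr_fun hij x)
  have hli : LinearIndepOn F (fun k => (χ k : F → F)) T :=
    ((linearIndependent_monoidHom F F).linearIndepOn _).comp_of_image hχ
  intro k hk
  refine sub_eq_zero.1 (linearIndepOn_finset_iff.1 hli (fun k => A k - B k) ?_ k hk)
  funext x
  simp [χ, sub_mul, sum_sub_distrib, h x]

theorem algebraMap_trace_eq_sum_pow_mul {s : ℕ} (hs : s.Coprime (finrank K F)) (x : F) :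
    algebraMap K F (Algebra.trace K F x) = ∑ k ∈ range (finrank K F), x ^ q ^ (s * k) := by
  rw [algebraMap_trace_eq_sum_pow, Nat.card_eq_fintype_card, ← sum_range_mul_mod hs]
  exact sum_congr rfl fun k _ => (pow_pow_eq_pow_pow_mod_s17 (pow_card_pow_finrank x) _).symm

theorem exists_eq_sum_of_finrank_range_eq_one {s : ℕ} (hs : s.Coprime (finrank K F))
    {φ : F →ₗ[K] F} (h : finrank K (LinearMap.range φ) = 1) :
    ∃ u v : F, u ≠ 0 ∧ v ≠ 0 ∧
      ∀ x, φ x = ∑ k ∈ range (finrank K F), u * v ^ q ^ (s * k) * x ^ q ^ (s * k) := by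
  obtain ⟨u, v, huv⟩ := φ.exists_eq_trace_smul_of_finrank_range_eq_one h
  have hφ : φ ≠ 0 := by
    rintro rfl; rw [LinearMap.range_zero, finrank_bot] at h; exact zero_ne_one h
  refine ⟨u, v, ?_, ?_, fun x => ?_⟩
  · rintro rfl; exact hφ (LinearMap.ext fun x => by simp [huv])
  · rintro rfl; exact hφ (LinearMap.ext fun x => by simp [huv])
  · rw [huv, Algebra.smul_def, algebraMap_trace_eq_sum_pow_mul hs, sum_mul]
    exact sum_congr rfl fun k _ => by rw [mul_pow]; ring

theorem mem_range_algebraMap_of_pow_card_eq {y : F} (h : y ^ q = y) :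
    y ∈ Set.range (algebraMap K F) := by
  rw [IsGalois.mem_range_algebraMap_iff_fixed]
  intro f
  obtain ⟨i, rfl⟩ := (bijective_frobeniusAlgEquivOfAlgebraic_pow K F).2 f
  rw [AlgEquiv.coe_pow, coe_frobeniusAlgEquivOfAlgebraic]
  exact Function.iterate_fixed h _

theorem isSquare_norm_of_pow_card_pow_eq {m : ℕ} (hF : finrank K F = 2 * m) {c : F}
    (hc : c ^ q ^ m = c) : IsSquare (Algebra.norm K c) := by
  rcases eq_or_ne c 0 with rfl | hc0
  · simp
  set t := ∏ i ∈ range m, c ^ q ^ i with ht_def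
  have hN : algebraMap K F (Algebra.norm K c) = t * t := by
    rw [algebraMap_norm_eq_prod_pow, hF, two_mul, prod_range_add, Nat.card_eq_fintype_card]
    exact congrArg _ (prod_congr rfl fun i _ => by rw [pow_add, pow_mul, hc])
  have ht : t ^ q = t := by
    refine mul_right_cancel₀ hc0 ?_
    calc t ^ q * c = ∏ i ∈ range (m + 1), c ^ q ^ i := by
          rw [prod_range_succ', ht_def, ← prod_pow, pow_zero, pow_one]
          exact congrArg (· * c) (prod_congr rfl fun i _ => by rw [← pow_mul, ← pow_succ])
      _ = t * c := by rw [prod_range_succ, hc]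
  obtain ⟨k, hk⟩ := mem_range_algebraMap_of_pow_card_eq ht
  exact ⟨k, (algebraMap K F).injective (by rw [hN, map_mul, hk])⟩

end FiniteField

theorem Finset.sum_range_two_mul_split {M : Type*} [AddCommMonoid M] {m : ℕ} (hm : 2 ≤ m)
    (f : ℕ → M) : ∑ k ∈ range (2 * m), f k =
      f 0 + ∑ j ∈ Icc 1 (m - 2), f j + f (m - 1) + f m + f (m + 1)
        + ∑ j ∈ Icc 1 (m - 2), f (2 * m - j) := by
  obtain ⟨p, rfl⟩ := Nat.exists_eq_add_of_le' hm
  have hIcc : ∀ g : ℕ → M, ∑ j ∈ Icc 1 p, g j = ∑ k ∈ range p, g (k + 1) := fun g => by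
    rw [← Ico_add_one_right_eq_Icc, sum_Ico_eq_sum_range]
    simp [add_comm]
  have hreflect : ∑ k ∈ range p, f (p + 4 + k) = ∑ k ∈ range p, f (2 * (p + 2) - (k + 1)) := by
    rw [← sum_range_reflect]
    exact sum_congr rfl fun k hk => by rw [mem_range] at hk; congr 1; omega
  rw [show 2 * (p + 2) = p + 4 + p by ring, sum_range_add, hreflect, Nat.add_sub_cancel, hIcc,
    hIcc, sum_range_succ, sum_range_succ, sum_range_succ, sum_range_succ',
    show p + 2 - 1 = p + 1 by omega, show p + 4 + p = 2 * (p + 2) by ring]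
  abel

def symCodeCoeff {R : Type*} [CommSemiring R] (q m s : ℕ) (η a b : R) (c : ℕ → R) (k : ℕ) : R :=
  if k = m - 1 then η * b
  else if k = m then a
  else if k = m + 1 then η ^ q ^ (s * (m + 1)) * b ^ q ^ s
  else if k < m then c k
  else c (2 * m - k) ^ q ^ (s * k)

theorem sum_range_symCodeCoeff_mul {R : Type*} [CommSemiring R] {q m s : ℕ} (hm : 2 ≤ m)
    (η a b : R) (c : ℕ → R) (x : R) :
    ∑ k ∈ range (2 * m), symCodeCoeff q m s η a b c k * x ^ q ^ (s * k) =
      c 0 * x + (∑ j ∈ Icc 1 (m - 2), c j * x ^ q ^ (s * j))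
          + η * b * x ^ q ^ (s * (m - 1)) + a * x ^ q ^ (s * m)
          + η ^ q ^ (s * (m + 1)) * b ^ q ^ s * x ^ q ^ (s * (m + 1))
          + ∑ j ∈ Icc 1 (m - 2), (c j * x) ^ q ^ (s * (2 * m - j)) := by
  rw [sum_range_two_mul_split hm]
  congr 1; congr 1; congr 1; congr 1; congr 1
  · rw [symCodeCoeff, if_neg (by omega), if_neg (by omega), if_neg (by omega), if_pos (by omega),
      mul_zero, pow_zero, pow_one]
  · refine sum_congr rfl fun j hj => ?_
    rw [mem_Icc] at hj
    rw [symCodeCoeff, if_neg (by omega), if_neg (by omega), if_neg (by omega), if_pos (by omega)]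
  · rw [symCodeCoeff, if_pos rfl]
  · rw [symCodeCoeff, if_neg (by omega), if_pos rfl]
  · rw [symCodeCoeff, if_neg (by omega), if_neg (by omega), if_pos rfl]
  · refine sum_congr rfl fun j hj => ?_
    rw [mem_Icc] at hj
    rw [symCodeCoeff, if_neg (by omega), if_neg (by omega), if_neg (by omega), if_neg (by omega),
      Nat.sub_sub_self (by omega), mul_pow]

theorem stmt_17_general (q m s : ℕ) (hm : 2 ≤ m)
    (hs : Nat.gcd s (2 * m) = 1)
    (K F : Type) [Field K] [Fintype K] [Field F] [Fintype F] [Algebra K F]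
    (hK : Fintype.card K = q) (hF : Fintype.card F = q ^ (2 * m))
    (η : F) (hη : ¬ IsSquare (Algebra.norm K η)) :
    ∀ φ : F →ₗ[K] F,
      (∃ a b : F, a ^ q ^ m = a ∧ b ^ q ^ m = b ∧ ∃ c : ℕ → F, ∀ x : F,
        φ x = c 0 * x + (∑ j ∈ Finset.Icc 1 (m - 2), c j * x ^ q ^ (s * j))
          + η * b * x ^ q ^ (s * (m - 1)) + a * x ^ q ^ (s * m)
          + η ^ q ^ (s * (m + 1)) * b ^ q ^ s * x ^ q ^ (s * (m + 1))
          + ∑ j ∈ Finset.Icc 1 (m - 2), (c j * x) ^ q ^ (s * (2 * m - j))) →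
      φ ≠ 0 → 2 ≤ Module.finrank K (LinearMap.range φ) := by
  rintro φ ⟨a, b, ha, hb, c, hφc⟩ hφ
  subst hK
  have hn : finrank K F = 2 * m := FiniteField.finrank_eq_of_card_eq_pow hF
  have hs' : s.Coprime (finrank K F) := hn ▸ hs
  by_contra! hlt
  have hrank : finrank K (LinearMap.range φ) = 1 := by
    have : finrank K (LinearMap.range φ) ≠ 0 := by
      rwa [ne_eq, Submodule.finrank_eq_zero, LinearMap.range_eq_bot]
    omega
  obtain ⟨u, v, hu, hv, huv⟩ := FiniteField.exists_eq_sum_of_finrank_range_eq_one hs' hrank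
  have hcoeff := FiniteField.eq_of_forall_sum_mul_pow_card_pow_eq (T := range (2 * m))
    (e := (s * ·)) (B := fun k => u * v ^ Fintype.card K ^ (s * k))
    (by rw [hn]; exact Nat.injOn_mul_mod hs)
    fun x => by rw [sum_range_symCodeCoeff_mul hm, ← hφc, huv, hn]
  have hηb : η * b = u * v ^ Fintype.card K ^ (s * (m - 1)) := by
    rw [← hcoeff (m - 1) (by simp; omega), symCodeCoeff, if_pos rfl]
  have ha_eq : a = u * v ^ Fintype.card K ^ (s * m) := by
    rw [← hcoeff m (by simp; omega), symCodeCoeff, if_neg (by omega), if_pos rfl]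
  have hb0 : b ≠ 0 := by
    rintro rfl
    exact mul_ne_zero hu (pow_ne_zero _ hv) (by rw [← hηb, mul_zero])
  have hnorm : Algebra.norm K η = Algebra.norm K (a / b) := by
    refine mul_right_cancel₀ (Algebra.norm_ne_zero_iff.2 hb0) ?_
    rw [← map_mul, ← map_mul, div_mul_cancel₀ a hb0, hηb, ha_eq, map_mul, map_mul,
      FiniteField.norm_pow_card_pow, FiniteField.norm_pow_card_pow]
  exact hη (hnorm ▸ FiniteField.isSquare_norm_of_pow_card_pow_eq hn (by rw [div_pow, ha, hb]))

/-- Let `q` be odd, `m ≥ 2`, `gcd(s,2m)=1`, and `η ∈ F_{q^{2m}}` with non-square norm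
over `F_q`. Every nonzero element of the symmetric code
`S = { a₀x + ∑_{j=1}^{m-2} aⱼ x^(q^(sj)) + ηb x^(q^(s(m-1))) + a x^(q^(sm))
      + η^(q^(s(m+1))) b^(q^s) x^(q^(s(m+1))) + ∑_{j=1}^{m-2} (aⱼx)^(q^(s(2m-j))) }`
(with `a, b ∈ F_{q^m}`) has rank at least `2` as an `F_q`-endomorphism of `F_{q^{2m}}`. -/
theorem stmt_17 (q m s : ℕ) (hq : IsPrimePow q) (hqodd : Odd q) (hm : 2 ≤ m)
    (hs : Nat.gcd s (2 * m) = 1)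
    (K F : Type) [Field K] [Fintype K] [Field F] [Fintype F] [Algebra K F]
    (hK : Fintype.card K = q) (hF : Fintype.card F = q ^ (2 * m))
    (η : F) (hη : ¬ IsSquare (Algebra.norm K η)) :
    ∀ φ : F →ₗ[K] F,
      (∃ a b : F, a ^ q ^ m = a ∧ b ^ q ^ m = b ∧ ∃ c : ℕ → F, ∀ x : F,
        φ x = c 0 * x + (∑ j ∈ Finset.Icc 1 (m - 2), c j * x ^ q ^ (s * j))
          + η * b * x ^ q ^ (s * (m - 1)) + a * x ^ q ^ (s * m)
          + η ^ q ^ (s * (m + 1)) * b ^ q ^ s * x ^ q ^ (s * (m + 1))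
          + ∑ j ∈ Finset.Icc 1 (m - 2), (c j * x) ^ q ^ (s * (2 * m - j))) →
      φ ≠ 0 → 2 ≤ Module.finrank K (LinearMap.range φ) :=
  stmt_17_general q m s hm hs K F hK hF η hη
end
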